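/- arXiv:math/0703351 — 9 statements merged into one kernel-verified Lean document; each statement's English description precedes it below -/
import Mathlib

section
/- Let F be a forest without isolated vertices. Then the sum over all dominating sets S of F of (-1)^{|S|} equals (-1)^{β₁(F) + |V|}, where β₁(F) is the matching number of F and |V| is the number of vertices of F. -/
/-- The matching number of `G`: the maximum cardinality of a set of pairwise
disjoint edges of `G`. -/
noncomputable def matchingNumber {V : Type*} [Fintype V] (G : SimpleGraph V) : ℕ :=
  sSup {n | ∃ M : Finset (Sym2 V), ↑M ⊆ G.edgeSet ∧
    (∀ e ∈ M, ∀ f ∈ M, e ≠ f → ∀ v : V, ¬(v ∈ e ∧ v ∈ f)) ∧ M.card = n}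

open Finset
open scoped Classical
set_option linter.unusedSectionVars false
set_option linter.unusedVariables false
set_option linter.unnecessarySimpa false
set_option maxHeartbeats 1000000

section Helpers

variable {V : Type*} [Fintype V]

noncomputable def domSum (G : SimpleGraph V) (A : Finset V) : ℤ :=
  ∑ S ∈ A.powerset.filter (fun S => ∀ v ∈ A, v ∈ S ∨ ∃ u ∈ S, G.Adj u v), (-1 : ℤ) ^ S.card

noncomputable def mnum (G : SimpleGraph V) (A : Finset V) : ℕ :=
  ((Finset.univ : Finset (Finset (Sym2 V))).filter
    (fun M => ↑M ⊆ G.edgeSet ∧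
      (∀ e ∈ M, ∀ f ∈ M, e ≠ f → ∀ v : V, ¬(v ∈ e ∧ v ∈ f)) ∧
      (∀ e ∈ M, ∀ v ∈ e, v ∈ A))).sup Finset.card

lemma exists_degree_le_one {W : Type*} [Fintype W] (H : SimpleGraph W)
    (hac : H.IsAcyclic) (hne : Nonempty W) :
    ∃ v : W, (Finset.univ.filter (H.Adj v)).card ≤ 1 := by
  by_contra hcon
  push_neg at hcon
  -- every vertex has ≥ 2 neighbors
  set L : Set ℕ := {n | ∃ (v w : W) (p : H.Walk v w), p.IsPath ∧ p.length = n} with hL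
  have hbdd : BddAbove L := by
    refine ⟨Fintype.card W, ?_⟩
    rintro n ⟨v, w, p, hp, rfl⟩
    exact le_of_lt hp.length_lt
  have hLne : L.Nonempty := by
    obtain ⟨v⟩ := hne
    exact ⟨0, v, v, SimpleGraph.Walk.nil, SimpleGraph.Walk.IsPath.nil, rfl⟩
  obtain ⟨v, w, p, hp, hlen⟩ := Nat.sSup_mem hLne hbdd
  cases p with
  | nil =>
    -- extend by any neighbor
    have h2 : 1 < (Finset.univ.filter (H.Adj v)).card := hcon v
    obtain ⟨x, hx⟩ := Finset.card_pos.mp (lt_trans Nat.zero_lt_one h2)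
    have hadj : H.Adj v x := (Finset.mem_filter.mp hx).2
    have h1L : 1 ∈ L := by
      refine ⟨x, v, SimpleGraph.Walk.cons hadj.symm SimpleGraph.Walk.nil, ?_, rfl⟩
      simp [hadj.ne']
    have := le_csSup hbdd h1L
    simp at hlen
    omega
  | cons h q =>
    rename_i y
    -- h : H.Adj v y, q : H.Walk y w
    have h2 : 1 < (Finset.univ.filter (H.Adj v)).card := hcon v
    obtain ⟨x, hxmem, hxy⟩ := Finset.exists_mem_ne h2
      y
    have hx : H.Adj v x := (Finset.mem_filter.mp hxmem).2
    by_cases hxs : x ∈ (SimpleGraph.Walk.cons h q).support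
    · -- cycle
      set p := SimpleGraph.Walk.cons h q with hpdef
      have hq' : (p.takeUntil x hxs).IsPath := hp.takeUntil hxs
      have hcyc : (SimpleGraph.Walk.cons hx.symm (p.takeUntil x hxs)).IsCycle := by
        rw [SimpleGraph.Walk.cons_isCycle_iff]
        refine ⟨hq', ?_⟩
        intro hmem
        have hsub := SimpleGraph.Walk.edges_takeUntil_subset p hxs
        have hmem' : s(x, v) ∈ p.edges := hsub hmem
        rw [hpdef, SimpleGraph.Walk.edges_cons, List.mem_cons] at hmem'
        rcases hmem' with heq | hmem''
        · rw [Sym2.eq_iff] at heq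
          rcases heq with ⟨rfl, rfl⟩ | ⟨h1, h2⟩
          · exact hx.ne rfl
          · exact hxy h1
        · have : v ∈ q.support := SimpleGraph.Walk.snd_mem_support_of_mem_edges q hmem''
          rw [SimpleGraph.Walk.cons_isPath_iff] at hp
          exact hp.2 this
      exact hac _ hcyc
    · -- longer path
      have hp' : (SimpleGraph.Walk.cons hx.symm (SimpleGraph.Walk.cons h q)).IsPath :=
        hp.cons hxs
      have hmemL : (SimpleGraph.Walk.cons hx.symm (SimpleGraph.Walk.cons h q)).length ∈ L :=
        ⟨x, w, _, hp', rfl⟩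
      have := le_csSup hbdd hmemL
      simp only [SimpleGraph.Walk.length_cons] at this hlen
      omega

lemma exists_leafish (G : SimpleGraph V) (hforest : G.IsAcyclic) (A : Finset V)
    (hA : A.Nonempty) : ∃ u ∈ A, (A.filter (G.Adj u)).card ≤ 1 := by
  set H : SimpleGraph ((A : Set V) : Type _) := G.induce (A : Set V) with hH
  have hHac : H.IsAcyclic := by
    intro v c hc
    have hinj : Function.Injective (SimpleGraph.Embedding.induce (G := G) (A : Set V)).toHom :=
      (SimpleGraph.Embedding.induce (G := G) (A : Set V)).injective
    exact hforest _ (hc.map hinj)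
  have hne : Nonempty ((A : Set V) : Type _) := by
    obtain ⟨a, ha⟩ := hA
    exact ⟨⟨a, by simpa using ha⟩⟩
  obtain ⟨v, hv⟩ := exists_degree_le_one H hHac hne
  refine ⟨(v : V), by simpa using v.2, ?_⟩
  have hcard : (A.filter (G.Adj (v : V))).card = (Finset.univ.filter (H.Adj v)).card := by
    apply Finset.card_bij (fun w hw => (⟨w, by simpa using (Finset.mem_filter.mp hw).1⟩ :
      ((A : Set V) : Type _)))
    · intro w hw
      simp only [Finset.mem_filter, Finset.mem_univ, true_and]
      exact (Finset.mem_filter.mp hw).2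
    · intro w hw w' hw' hww'
      simpa [Subtype.ext_iff] using hww'
    · intro b hb
      refine ⟨(b : V), Finset.mem_filter.mpr ⟨by simpa using b.2, ?_⟩, by simp⟩
      exact (Finset.mem_filter.mp hb).2
  rw [hcard]; convert hv

lemma domSum_empty (G : SimpleGraph V) : domSum G ∅ = 1 := by simp [domSum]

lemma domSum_isolated (G : SimpleGraph V) {A : Finset V} {u : V} (hu : u ∈ A)
    (h0 : ∀ w ∈ A, ¬ G.Adj u w) :
    domSum G A = - domSum G (A.erase u) := by
  unfold domSum
  rw [eq_comm, neg_eq_iff_eq_neg, eq_comm, ← Finset.sum_neg_distrib]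
  refine Finset.sum_nbij' (fun S => S.erase u) (fun S => insert u S) ?_ ?_ ?_ ?_ ?_
  · -- erase maps dominating sets of A to dominating sets of A.erase u
    intro S hS
    rw [Finset.mem_filter, Finset.mem_powerset] at hS ⊢
    obtain ⟨hSA, hdom⟩ := hS
    refine ⟨Finset.erase_subset_erase u hSA, ?_⟩
    intro w hw
    have hwA : w ∈ A := Finset.mem_of_mem_erase hw
    have hwu : w ≠ u := (Finset.mem_erase.mp hw).1
    rcases hdom w hwA with hwS | ⟨x, hxS, hadj⟩
    · exact Or.inl (Finset.mem_erase.mpr ⟨hwu, hwS⟩)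
    · have hxu : x ≠ u := by
        rintro rfl
        exact h0 w hwA hadj
      exact Or.inr ⟨x, Finset.mem_erase.mpr ⟨hxu, hxS⟩, hadj⟩
  · intro S hS
    rw [Finset.mem_filter, Finset.mem_powerset] at hS ⊢
    obtain ⟨hSA, hdom⟩ := hS
    constructor
    · exact Finset.insert_subset hu (hSA.trans (Finset.erase_subset u A))
    · intro w hw
      by_cases hwu : w = u
      · exact Or.inl (hwu ▸ Finset.mem_insert_self u S)
      · rcases hdom w (Finset.mem_erase.mpr ⟨hwu, hw⟩) with hwS | ⟨x, hxS, hadj⟩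
        · exact Or.inl (Finset.mem_insert_of_mem hwS)
        · exact Or.inr ⟨x, Finset.mem_insert_of_mem hxS, hadj⟩
  · -- left inverse: need u ∈ S
    intro S hS
    rw [Finset.mem_filter, Finset.mem_powerset] at hS
    obtain ⟨hSA, hdom⟩ := hS
    have huS : u ∈ S := by
      rcases hdom u hu with h | ⟨x, hxS, hadj⟩
      · exact h
      · exact absurd hadj.symm (h0 x (hSA hxS))
    exact Finset.insert_erase huS
  · intro S hS
    rw [Finset.mem_filter, Finset.mem_powerset] at hS
    have huS : u ∉ S := fun h => Finset.notMem_erase u A (hS.1 h)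
    exact Finset.erase_insert huS
  · intro S hS
    rw [Finset.mem_filter, Finset.mem_powerset] at hS
    obtain ⟨hSA, hdom⟩ := hS
    have huS : u ∈ S := by
      rcases hdom u hu with h | ⟨x, hxS, hadj⟩
      · exact h
      · exact absurd hadj.symm (h0 x (hSA hxS))
    have hc : S.card = (S.erase u).card + 1 := by
      rw [Finset.card_erase_of_mem huS]
      have : 1 ≤ S.card := Finset.card_pos.mpr ⟨u, huS⟩
      omega
    rw [hc, pow_succ]
    ring

lemma domSum_leaf (G : SimpleGraph V) {A : Finset V} {u v : V} (hu : u ∈ A) (hv : v ∈ A)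
    (huv : G.Adj u v) (hnb : ∀ w ∈ A, G.Adj u w → w = v) :
    domSum G A = - domSum G ((A.erase u).erase v) := by
  have huvne : u ≠ v := huv.ne
  set D := A.powerset.filter (fun S => ∀ w ∈ A, w ∈ S ∨ ∃ x ∈ S, G.Adj x w) with hD
  have hsplit :
      domSum G A = (∑ S ∈ D.filter (fun S => v ∈ S), (-1 : ℤ) ^ S.card)
        + ∑ S ∈ D.filter (fun S => v ∉ S), (-1 : ℤ) ^ S.card := by
    rw [domSum, ← hD, Finset.sum_filter_add_sum_filter_not]
  -- first sum is zero by toggling u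
  have h1 : (∑ S ∈ D.filter (fun S => v ∈ S), (-1 : ℤ) ^ S.card) = 0 := by
    set g : Finset V → Finset V := fun S => if u ∈ S then S.erase u else insert u S with hg
    have hmem : ∀ S ∈ D.filter (fun S => v ∈ S), g S ∈ D.filter (fun S => v ∈ S) := by
      intro S hS
      rw [Finset.mem_filter] at hS
      obtain ⟨hSD, hvS⟩ := hS
      rw [hD, Finset.mem_filter, Finset.mem_powerset] at hSD
      obtain ⟨hSA, hdom⟩ := hSD
      rw [Finset.mem_filter, hD, Finset.mem_filter, Finset.mem_powerset]
      by_cases huS : u ∈ S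
      · simp only [hg, if_pos huS]
        refine ⟨⟨(Finset.erase_subset u S).trans hSA, ?_⟩,
          Finset.mem_erase.mpr ⟨huvne.symm, hvS⟩⟩
        intro w hw
        by_cases hwu : w = u
        · subst hwu
          exact Or.inr ⟨v, Finset.mem_erase.mpr ⟨huvne.symm, hvS⟩, huv.symm⟩
        · rcases hdom w hw with hwS | ⟨x, hxS, hadj⟩
          · exact Or.inl (Finset.mem_erase.mpr ⟨hwu, hwS⟩)
          · by_cases hxu : x = u
            · subst hxu
              have hwv : w = v := hnb w hw hadj
              subst hwv
              exact Or.inl (Finset.mem_erase.mpr ⟨huvne.symm, hvS⟩)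
            · exact Or.inr ⟨x, Finset.mem_erase.mpr ⟨hxu, hxS⟩, hadj⟩
      · simp only [hg, if_neg huS]
        refine ⟨⟨Finset.insert_subset hu hSA, ?_⟩, Finset.mem_insert_of_mem hvS⟩
        intro w hw
        rcases hdom w hw with hwS | ⟨x, hxS, hadj⟩
        · exact Or.inl (Finset.mem_insert_of_mem hwS)
        · exact Or.inr ⟨x, Finset.mem_insert_of_mem hxS, hadj⟩
    have hsign : ∀ S ∈ D.filter (fun S => v ∈ S),
        (-1 : ℤ) ^ S.card + (-1 : ℤ) ^ (g S).card = 0 := by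
      intro S _
      by_cases huS : u ∈ S
      · simp only [hg, if_pos huS]
        rw [← Finset.card_erase_add_one huS, pow_succ]
        ring
      · simp only [hg, if_neg huS]
        rw [Finset.card_insert_of_notMem huS, pow_succ]
        ring
    have hneq : ∀ S ∈ D.filter (fun S => v ∈ S), g S ≠ S := by
      intro S _
      by_cases huS : u ∈ S
      · simp only [hg, if_pos huS]
        intro h
        have h2 := Finset.card_erase_of_mem huS
        rw [h] at h2
        have h3 : 1 ≤ S.card := Finset.card_pos.mpr ⟨u, huS⟩
        omega
      · simp only [hg, if_neg huS]
        intro h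
        have h2 := Finset.card_insert_of_notMem huS
        rw [h] at h2
        omega
    have hinv : ∀ S ∈ D.filter (fun S => v ∈ S), g (g S) = S := by
      intro S _
      by_cases huS : u ∈ S
      · simp only [hg, if_pos huS, if_neg (Finset.notMem_erase u S)]
        exact Finset.insert_erase huS
      · simp only [hg, if_neg huS, if_pos (Finset.mem_insert_self u S)]
        exact Finset.erase_insert huS
    exact Finset.sum_involution (fun S _ => g S) (fun S hS => hsign S hS)
      (fun S hS _ => hneq S hS) (fun S hS => hmem S hS) (fun S hS => hinv S hS)
  -- second sum
  have h2 : (∑ S ∈ D.filter (fun S => v ∉ S), (-1 : ℤ) ^ S.card)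
      = - domSum G ((A.erase u).erase v) := by
    rw [domSum, eq_comm, neg_eq_iff_eq_neg, eq_comm, ← Finset.sum_neg_distrib]
    have huSmem : ∀ S ∈ D.filter (fun S => v ∉ S), u ∈ S := by
      intro S hS
      rw [Finset.mem_filter] at hS
      obtain ⟨hSD, hvS⟩ := hS
      rw [hD, Finset.mem_filter, Finset.mem_powerset] at hSD
      obtain ⟨hSA, hdom⟩ := hSD
      rcases hdom u hu with h | ⟨x, hxS, hadj⟩
      · exact h
      · have : x = v := hnb x (hSA hxS) hadj.symm
        exact absurd (this ▸ hxS) hvS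
    refine Finset.sum_nbij' (fun S => S.erase u) (fun S => insert u S) ?_ ?_ ?_ ?_ ?_
    · intro S hS
      have huS := huSmem S hS
      rw [Finset.mem_filter] at hS
      obtain ⟨hSD, hvS⟩ := hS
      rw [hD, Finset.mem_filter, Finset.mem_powerset] at hSD
      obtain ⟨hSA, hdom⟩ := hSD
      rw [Finset.mem_filter, Finset.mem_powerset]
      constructor
      · intro x hx
        rw [Finset.mem_erase] at hx
        exact Finset.mem_erase.mpr ⟨fun h => hvS (h ▸ hx.2),
          Finset.mem_erase.mpr ⟨hx.1, hSA hx.2⟩⟩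
      · intro w hw
        rw [Finset.mem_erase, Finset.mem_erase] at hw
        obtain ⟨hwv, hwu, hwA⟩ := hw
        rcases hdom w hwA with hwS | ⟨x, hxS, hadj⟩
        · exact Or.inl (Finset.mem_erase.mpr ⟨hwu, hwS⟩)
        · by_cases hxu : x = u
          · subst hxu
            exact absurd (hnb w hwA hadj) hwv
          · exact Or.inr ⟨x, Finset.mem_erase.mpr ⟨hxu, hxS⟩, hadj⟩
    · intro S hS
      rw [Finset.mem_filter, Finset.mem_powerset] at hS
      obtain ⟨hSA, hdom⟩ := hS
      have hSsub : S ⊆ A := fun x hx =>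
        Finset.mem_of_mem_erase (Finset.mem_of_mem_erase (hSA hx))
      have hvnotS : v ∉ S := fun h => (Finset.mem_erase.mp (hSA h)).1 rfl
      have hunotS : u ∉ S := fun h =>
        (Finset.mem_erase.mp (Finset.mem_of_mem_erase (hSA h))).1 rfl
      rw [Finset.mem_filter, hD, Finset.mem_filter, Finset.mem_powerset]
      refine ⟨⟨Finset.insert_subset hu hSsub, ?_⟩, ?_⟩
      · intro w hw
        by_cases hwu : w = u
        · exact Or.inl (hwu ▸ Finset.mem_insert_self u S)
        · by_cases hwv : w = v
          · exact Or.inr ⟨u, Finset.mem_insert_self u S, hwv ▸ huv⟩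
          · rcases hdom w (Finset.mem_erase.mpr ⟨hwv, Finset.mem_erase.mpr ⟨hwu, hw⟩⟩)
              with hwS | ⟨x, hxS, hadj⟩
            · exact Or.inl (Finset.mem_insert_of_mem hwS)
            · exact Or.inr ⟨x, Finset.mem_insert_of_mem hxS, hadj⟩
      · simp only [Finset.mem_insert, not_or]
        exact ⟨huvne.symm, hvnotS⟩
    · intro S hS
      exact Finset.insert_erase (huSmem S hS)
    · intro S hS
      rw [Finset.mem_filter, Finset.mem_powerset] at hS
      have hunotS : u ∉ S := fun h =>
        (Finset.mem_erase.mp (Finset.mem_of_mem_erase (hS.1 h))).1 rfl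
      exact Finset.erase_insert hunotS
    · intro S hS
      have huS := huSmem S hS
      rw [← Finset.card_erase_add_one huS, pow_succ]
      ring
  rw [hsplit, h1, h2, zero_add]

lemma edge_decomp {G : SimpleGraph V} {e : Sym2 V} (he : e ∈ G.edgeSet) {x : V} (hx : x ∈ e) :
    ∃ y, G.Adj x y ∧ e = s(x, y) := by
  induction e using Sym2.ind with
  | _ a b =>
    rw [Sym2.mem_iff] at hx
    rw [SimpleGraph.mem_edgeSet] at he
    rcases hx with rfl | rfl
    · exact ⟨b, he, rfl⟩
    · exact ⟨a, he.symm, Sym2.eq_swap.symm⟩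

lemma empty_mem_mnumset (G : SimpleGraph V) (A : Finset V) :
    (∅ : Finset (Sym2 V)) ∈ (Finset.univ : Finset (Finset (Sym2 V))).filter
      (fun M => ↑M ⊆ G.edgeSet ∧
        (∀ e ∈ M, ∀ f ∈ M, e ≠ f → ∀ v : V, ¬(v ∈ e ∧ v ∈ f)) ∧
        (∀ e ∈ M, ∀ v ∈ e, v ∈ A)) := by
  simp

lemma mnum_empty (G : SimpleGraph V) : mnum G (∅ : Finset V) = 0 := by
  have h : mnum G (∅ : Finset V) ≤ 0 := by
    apply Finset.sup_le
    intro M hM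
    rw [Finset.mem_filter] at hM
    obtain ⟨-, hedge, -, hvert⟩ := hM
    rcases Finset.eq_empty_or_nonempty M with rfl | ⟨e, he⟩
    · simp
    · exact absurd (hvert e he _ (Sym2.out_fst_mem e)) (Finset.notMem_empty _)
  omega

lemma mnum_isolated (G : SimpleGraph V) {A : Finset V} {u : V}
    (h0 : ∀ w ∈ A, ¬ G.Adj u w) :
    mnum G A = mnum G (A.erase u) := by
  unfold mnum
  congr 1
  apply Finset.filter_congr
  intro M _
  constructor
  · rintro ⟨hedge, hdisj, hvert⟩
    refine ⟨hedge, hdisj, ?_⟩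
    intro e he x hx
    have hxA : x ∈ A := hvert e he x hx
    refine Finset.mem_erase.mpr ⟨?_, hxA⟩
    rintro rfl
    obtain ⟨y, hadj, rfl⟩ := edge_decomp (hedge he) hx
    exact h0 y (hvert _ he y (Sym2.mem_mk_right _ _)) hadj
  · rintro ⟨hedge, hdisj, hvert⟩
    exact ⟨hedge, hdisj, fun e he x hx => Finset.mem_of_mem_erase (hvert e he x hx)⟩

lemma mnum_leaf (G : SimpleGraph V) {A : Finset V} {u v : V} (hu : u ∈ A) (hv : v ∈ A)
    (huv : G.Adj u v) (hnb : ∀ w ∈ A, G.Adj u w → w = v) :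
    mnum G A = mnum G ((A.erase u).erase v) + 1 := by
  have huvne : u ≠ v := huv.ne
  apply le_antisymm
  · -- ≤ : given matching M in A, drop edges touching {u,v}
    unfold mnum
    apply Finset.sup_le
    intro M hM
    rw [Finset.mem_filter] at hM
    obtain ⟨-, hedge, hdisj, hvert⟩ := hM
    set M₀ := M.filter (fun e => u ∉ e ∧ v ∉ e) with hM₀
    have hM₀mem : M₀ ∈ (Finset.univ : Finset (Finset (Sym2 V))).filter
        (fun M => ↑M ⊆ G.edgeSet ∧
          (∀ e ∈ M, ∀ f ∈ M, e ≠ f → ∀ x : V, ¬(x ∈ e ∧ x ∈ f)) ∧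
          (∀ e ∈ M, ∀ x ∈ e, x ∈ (A.erase u).erase v)) := by
      rw [Finset.mem_filter]
      refine ⟨Finset.mem_univ _, ?_, ?_, ?_⟩
      · intro e he
        rw [Finset.mem_coe, hM₀, Finset.mem_filter] at he
        exact hedge he.1
      · intro e he f hf hef x
        rw [hM₀, Finset.mem_filter] at he hf
        exact hdisj e he.1 f hf.1 hef x
      · intro e he x hx
        rw [hM₀, Finset.mem_filter] at he
        obtain ⟨heM, hue, hve⟩ := he
        exact Finset.mem_erase.mpr ⟨fun h => hve (h ▸ hx),
          Finset.mem_erase.mpr ⟨fun h => hue (h ▸ hx), hvert e heM x hx⟩⟩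
    -- every edge of M touching {u, v} contains v
    have hkey : ∀ e ∈ M, (u ∈ e ∨ v ∈ e) → v ∈ e := by
      intro e he h
      rcases h with h | h
      · obtain ⟨y, hadj, rfl⟩ := edge_decomp (hedge he) h
        have : y = v := hnb y (hvert _ he y (Sym2.mem_mk_right _ _)) hadj
        subst this
        exact Sym2.mem_mk_right _ _
      · exact h
    have hcard1 : (M.filter (fun e => ¬(u ∉ e ∧ v ∉ e))).card ≤ 1 := by
      apply Finset.card_le_one.mpr
      intro e he f hf
      rw [Finset.mem_filter] at he hf
      obtain ⟨heM, hetouch⟩ := he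
      obtain ⟨hfM, hftouch⟩ := hf
      push_neg at hetouch hftouch
      by_contra hef
      have hve : v ∈ e := hkey e heM (by tauto)
      have hvf : v ∈ f := hkey f hfM (by tauto)
      exact hdisj e heM f hfM hef v ⟨hve, hvf⟩
    have hsplit : (M.filter (fun e => u ∉ e ∧ v ∉ e)).card
        + (M.filter (fun e => ¬(u ∉ e ∧ v ∉ e))).card = M.card :=
      Finset.card_filter_add_card_filter_not (fun e => u ∉ e ∧ v ∉ e)
    calc M.card = M₀.card + (M.filter (fun e => ¬(u ∉ e ∧ v ∉ e))).card := by
          rw [hM₀]; omega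
      _ ≤ mnum G ((A.erase u).erase v) + 1 :=
          Nat.add_le_add (Finset.le_sup hM₀mem) hcard1
  · -- ≥ : extend a maximum matching of A' by the edge s(u,v)
    have hne : ((Finset.univ : Finset (Finset (Sym2 V))).filter
        (fun M => ↑M ⊆ G.edgeSet ∧
          (∀ e ∈ M, ∀ f ∈ M, e ≠ f → ∀ x : V, ¬(x ∈ e ∧ x ∈ f)) ∧
          (∀ e ∈ M, ∀ x ∈ e, x ∈ (A.erase u).erase v))).Nonempty :=
      ⟨∅, empty_mem_mnumset G _⟩
    obtain ⟨M', hM'mem, hsup⟩ := Finset.exists_mem_eq_sup _ hne Finset.card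
    rw [Finset.mem_filter] at hM'mem
    obtain ⟨-, hedge', hdisj', hvert'⟩ := hM'mem
    have hnotuv : ∀ e ∈ M', u ∉ e ∧ v ∉ e := by
      intro e he
      constructor
      · intro h
        exact (Finset.notMem_erase u A) (Finset.mem_of_mem_erase (hvert' e he u h))
      · intro h
        have := hvert' e he v h
        exact (Finset.mem_erase.mp this).1 rfl
    have hsuv : s(u, v) ∉ M' := fun h => (hnotuv _ h).1 (Sym2.mem_mk_left _ _)
    have hMmem : insert s(u, v) M' ∈ (Finset.univ : Finset (Finset (Sym2 V))).filter
        (fun M => ↑M ⊆ G.edgeSet ∧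
          (∀ e ∈ M, ∀ f ∈ M, e ≠ f → ∀ x : V, ¬(x ∈ e ∧ x ∈ f)) ∧
          (∀ e ∈ M, ∀ x ∈ e, x ∈ A)) := by
      rw [Finset.mem_filter]
      refine ⟨Finset.mem_univ _, ?_, ?_, ?_⟩
      · intro e he
        rw [Finset.mem_coe, Finset.mem_insert] at he
        rcases he with rfl | he
        · exact (SimpleGraph.mem_edgeSet G).mpr huv
        · exact hedge' he
      · intro e he f hf hef x hx
        rw [Finset.mem_insert] at he hf
        obtain ⟨hxe, hxf⟩ := hx
        rcases he with rfl | he <;> rcases hf with rfl | hf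
        · exact hef rfl
        · rcases Sym2.mem_iff.mp hxe with rfl | rfl
          · exact (hnotuv f hf).1 hxf
          · exact (hnotuv f hf).2 hxf
        · rcases Sym2.mem_iff.mp hxf with rfl | rfl
          · exact (hnotuv e he).1 hxe
          · exact (hnotuv e he).2 hxe
        · exact hdisj' e he f hf hef x ⟨hxe, hxf⟩
      · intro e he x hx
        rw [Finset.mem_insert] at he
        rcases he with rfl | he
        · rcases Sym2.mem_iff.mp hx with rfl | rfl
          · exact hu
          · exact hv
        · exact Finset.mem_of_mem_erase (Finset.mem_of_mem_erase (hvert' e he x hx))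
    have hcard : (insert s(u, v) M').card = M'.card + 1 :=
      Finset.card_insert_of_notMem hsuv
    calc mnum G ((A.erase u).erase v) + 1 = M'.card + 1 := by
          unfold mnum; rw [hsup]
      _ = (insert s(u, v) M').card := hcard.symm
      _ ≤ mnum G A := Finset.le_sup hMmem

lemma domSum_eq (G : SimpleGraph V) (hforest : G.IsAcyclic) :
    ∀ A : Finset V, domSum G A = (-1) ^ (mnum G A + A.card) := by
  intro A
  induction A using Finset.strongInduction with
  | _ A ih =>
    rcases A.eq_empty_or_nonempty with rfl | hA
    · simp [domSum_empty, mnum_empty]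
    · obtain ⟨u, huA, hdeg⟩ := exists_leafish G hforest A hA
      rcases Nat.le_one_iff_eq_zero_or_eq_one.mp hdeg with h0 | h1
      · -- isolated vertex
        have h0' : ∀ w ∈ A, ¬ G.Adj u w := by
          intro w hw hadj
          have : w ∈ A.filter (G.Adj u) := Finset.mem_filter.mpr ⟨hw, hadj⟩
          rw [Finset.card_eq_zero.mp h0] at this
          exact absurd this (Finset.notMem_empty _)
        have hsub : A.erase u ⊂ A := Finset.erase_ssubset huA
        rw [domSum_isolated G huA h0', ih _ hsub, mnum_isolated G h0']
        have hc : A.card = (A.erase u).card + 1 := (Finset.card_erase_add_one huA).symm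
        rw [hc, show mnum G (A.erase u) + ((A.erase u).card + 1)
          = (mnum G (A.erase u) + (A.erase u).card) + 1 by omega, pow_succ]
        ring
      · -- leaf
        obtain ⟨v, hfil⟩ := Finset.card_eq_one.mp h1
        have hvmem : v ∈ A.filter (G.Adj u) := hfil ▸ Finset.mem_singleton_self v
        have hvA : v ∈ A := (Finset.mem_filter.mp hvmem).1
        have huv : G.Adj u v := (Finset.mem_filter.mp hvmem).2
        have hnb : ∀ w ∈ A, G.Adj u w → w = v := by
          intro w hw hadj
          have : w ∈ A.filter (G.Adj u) := Finset.mem_filter.mpr ⟨hw, hadj⟩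
          rw [hfil] at this
          exact Finset.mem_singleton.mp this
        have hvA' : v ∈ A.erase u := Finset.mem_erase.mpr ⟨huv.ne', hvA⟩
        have hsub : (A.erase u).erase v ⊂ A :=
          lt_of_le_of_lt (Finset.erase_subset v (A.erase u)) (Finset.erase_ssubset huA)
        rw [domSum_leaf G huA hvA huv hnb, ih _ hsub, mnum_leaf G huA hvA huv hnb]
        have hc1 : (A.erase u).card = ((A.erase u).erase v).card + 1 :=
          (Finset.card_erase_add_one hvA').symm
        have hc2 : A.card = (A.erase u).card + 1 := (Finset.card_erase_add_one huA).symm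
        rw [hc2, hc1, show mnum G ((A.erase u).erase v) + 1
            + (((A.erase u).erase v).card + 1 + 1)
          = (mnum G ((A.erase u).erase v) + ((A.erase u).erase v).card) + 3 by omega,
          pow_add]
        ring

lemma matchingNumber_eq_mnum (G : SimpleGraph V) :
    matchingNumber G = mnum G Finset.univ := by
  have hne : ((Finset.univ : Finset (Finset (Sym2 V))).filter
      (fun M => ↑M ⊆ G.edgeSet ∧
        (∀ e ∈ M, ∀ f ∈ M, e ≠ f → ∀ v : V, ¬(v ∈ e ∧ v ∈ f)) ∧
        (∀ e ∈ M, ∀ v ∈ e, v ∈ (Finset.univ : Finset V)))).Nonempty := by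
    refine ⟨∅, ?_⟩
    simp
  obtain ⟨M, hMmem, hsup⟩ := Finset.exists_mem_eq_sup _ hne Finset.card
  rw [Finset.mem_filter] at hMmem
  apply IsGreatest.csSup_eq
  constructor
  · exact ⟨M, hMmem.2.1, hMmem.2.2.1, by rw [← hsup]; rfl⟩
  · rintro n ⟨M', h1, h2, rfl⟩
    exact Finset.le_sup (Finset.mem_filter.mpr
      ⟨Finset.mem_univ _, h1, h2, fun _ _ _ _ => Finset.mem_univ _⟩)

end Helpers

open scoped Classical in
/-- For a forest `F` without isolated vertices, the alternating sum
`Σ_{S dominating} (-1)^{|S|}` equals `(-1)^{β₁(F) + |V|}`. -/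
theorem sum_dominating_sets_eq {V : Type*} [Fintype V] (G : SimpleGraph V)
    (hforest : G.IsAcyclic) (hiso : ∀ v : V, ∃ u, G.Adj u v) :
    ∑ S ∈ Finset.univ.powerset.filter
        (fun S : Finset V => ∀ v : V, v ∈ S ∨ ∃ u ∈ S, G.Adj u v),
      (-1 : ℤ) ^ S.card
    = (-1) ^ (matchingNumber G + Fintype.card V) := by
  have h1 : ∑ S ∈ Finset.univ.powerset.filter
        (fun S : Finset V => ∀ v : V, v ∈ S ∨ ∃ u ∈ S, G.Adj u v),
      (-1 : ℤ) ^ S.card = domSum G Finset.univ := by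
    unfold domSum
    apply Finset.sum_congr
    · apply Finset.filter_congr
      intro S _
      simp
    · intros; rfl
  rw [h1, domSum_eq G hforest, matchingNumber_eq_mnum, Finset.card_univ]
end

section
/- Let G be a bipartite graph. Then the minimum cardinality of a vertex cover of G equals the maximum cardinality of a matching of G (König's theorem). -/
/-- The vertex covering number of `G`: the minimum cardinality of a set of
vertices meeting every edge of `G`. -/
noncomputable def vertexCoverNumber {V : Type*} [Fintype V] (G : SimpleGraph V) : ℕ :=
  sInf {n | ∃ C : Finset V, (∀ u v : V, G.Adj u v → u ∈ C ∨ v ∈ C) ∧ C.card = n}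

open Finset in
/-- Easy direction: any matching is at most as large as any vertex cover. -/
lemma matching_card_le_cover_card {V : Type*} [Fintype V] (G : SimpleGraph V)
    (M : Finset (Sym2 V)) (hM : ↑M ⊆ G.edgeSet)
    (hdisj : ∀ e ∈ M, ∀ f ∈ M, e ≠ f → ∀ v : V, ¬(v ∈ e ∧ v ∈ f))
    (C : Finset V) (hC : ∀ u v : V, G.Adj u v → u ∈ C ∨ v ∈ C) :
    M.card ≤ C.card := by
  classical
  have hex : ∀ e ∈ M, ∃ v, v ∈ C ∧ v ∈ e := by
    intro e he
    induction e using Sym2.inductionOn with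
    | hf u v =>
      have hadj : G.Adj u v := hM he
      rcases hC u v hadj with h | h
      · exact ⟨u, h, Sym2.mem_mk_left u v⟩
      · exact ⟨v, h, Sym2.mem_mk_right u v⟩
  set f : Sym2 V → V := fun e =>
    if h : ∃ v, v ∈ C ∧ v ∈ e then h.choose else e.out.1 with hf
  apply Finset.card_le_card_of_injOn f
  · intro e he
    have h : ∃ v, v ∈ C ∧ v ∈ e := hex e he
    simp only [hf, dif_pos h]
    exact h.choose_spec.1
  · intro e he e' he' heq
    by_contra hne
    have h : ∃ v, v ∈ C ∧ v ∈ e := hex e he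
    have h' : ∃ v, v ∈ C ∧ v ∈ e' := hex e' he'
    apply hdisj e he e' he' hne (f e)
    constructor
    · simp only [hf, dif_pos h]; exact h.choose_spec.2
    · rw [heq]; simp only [hf, dif_pos h']; exact h'.choose_spec.2

open Finset in
/-- Given a minimum vertex cover `Cm` and an independent subset `A ⊆ Cm`, there is
a matching of the vertices of `A` to neighbours outside `Cm`. -/
lemma exists_saturating {V : Type*} [Fintype V] (G : SimpleGraph V) (Cm : Finset V)
    (hcov : ∀ u v : V, G.Adj u v → u ∈ Cm ∨ v ∈ Cm)
    (hmin : ∀ C : Finset V, (∀ u v : V, G.Adj u v → u ∈ C ∨ v ∈ C) → Cm.card ≤ C.card)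
    (A : Finset V) (hA : A ⊆ Cm) (hind : ∀ a ∈ A, ∀ a' ∈ A, ¬ G.Adj a a') :
    ∃ f : {x // x ∈ A} → V, Function.Injective f ∧
      ∀ a : {x // x ∈ A}, G.Adj a.1 (f a) ∧ f a ∉ Cm := by
  classical
  set t : {x // x ∈ A} → Finset V :=
    fun a => Finset.univ.filter (fun y => G.Adj a.1 y ∧ y ∉ Cm) with ht
  have hall : ∀ s : Finset {x // x ∈ A}, s.card ≤ (s.biUnion t).card := by
    intro s
    by_contra hlt
    push_neg at hlt
    set N : Finset V := s.biUnion t with hN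
    set img : Finset V := s.image Subtype.val with himg
    have himgA : img ⊆ A := by
      intro x hx
      rcases Finset.mem_image.mp hx with ⟨a, _, rfl⟩
      exact a.2
    have hNC : ∀ y ∈ N, y ∉ Cm := by
      intro y hy
      rcases Finset.mem_biUnion.mp hy with ⟨a, _, hya⟩
      exact (Finset.mem_filter.mp hya).2.2
    set C' : Finset V := (Cm \ img) ∪ N with hC'
    have key : ∀ w z, G.Adj w z → w ∈ img → z ∈ C' := by
      intro w z hadj hw
      by_cases hz : z ∈ Cm
      · by_cases hz2 : z ∈ img
        · exact absurd hadj (hind w (himgA hw) z (himgA hz2))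
        · exact Finset.mem_union_left _ (Finset.mem_sdiff.mpr ⟨hz, hz2⟩)
      · apply Finset.mem_union_right
        rcases Finset.mem_image.mp hw with ⟨a, ha, rfl⟩
        exact Finset.mem_biUnion.mpr ⟨a, ha,
          Finset.mem_filter.mpr ⟨Finset.mem_univ _, hadj, hz⟩⟩
    have hcov' : ∀ u v : V, G.Adj u v → u ∈ C' ∨ v ∈ C' := by
      intro u v hadj
      rcases hcov u v hadj with hu | hv
      · by_cases h : u ∈ img
        · exact Or.inr (key u v hadj h)
        · exact Or.inl (Finset.mem_union_left _ (Finset.mem_sdiff.mpr ⟨hu, h⟩))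
      · by_cases h : v ∈ img
        · exact Or.inl (key v u hadj.symm h)
        · exact Or.inr (Finset.mem_union_left _ (Finset.mem_sdiff.mpr ⟨hv, h⟩))
    have hcard : C'.card < Cm.card := by
      have h1 : C'.card ≤ (Cm \ img).card + N.card := Finset.card_union_le _ _
      have h2 : (Cm \ img).card = Cm.card - img.card :=
        Finset.card_sdiff_of_subset (himgA.trans hA)
      have h3 : img.card = s.card :=
        Finset.card_image_of_injective _ Subtype.val_injective
      have h4 : img.card ≤ Cm.card := Finset.card_le_card (himgA.trans hA)
      omega
    exact absurd (hmin C' hcov') (not_le.mpr hcard)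
  obtain ⟨f, hinj, hf⟩ := (Finset.all_card_le_biUnion_card_iff_exists_injective t).mp hall
  refine ⟨f, hinj, fun a => ?_⟩
  have := hf a
  rw [ht] at this
  simp only [Finset.mem_filter] at this
  exact ⟨this.2.1, this.2.2⟩

/-- König's theorem: for a bipartite graph the minimum cardinality of a vertex
cover equals the maximum cardinality of a matching. -/
theorem koenig {V : Type*} [Fintype V] (G : SimpleGraph V) (hbip : G.Colorable 2) :
    vertexCoverNumber G = matchingNumber G := by
  classical
  set Smat : Set ℕ := {n | ∃ M : Finset (Sym2 V), ↑M ⊆ G.edgeSet ∧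
    (∀ e ∈ M, ∀ f ∈ M, e ≠ f → ∀ v : V, ¬(v ∈ e ∧ v ∈ f)) ∧ M.card = n} with hSmat
  set Scov : Set ℕ := {n | ∃ C : Finset V, (∀ u v : V, G.Adj u v → u ∈ C ∨ v ∈ C) ∧
    C.card = n} with hScov
  have hbdd : BddAbove Smat := by
    refine ⟨Fintype.card (Sym2 V), ?_⟩
    rintro n ⟨M, -, -, rfl⟩
    exact Finset.card_le_univ M
  have hmatne : Smat.Nonempty := ⟨0, ∅, by simp, by simp, by simp⟩
  have hcovne : Scov.Nonempty :=
    ⟨(Finset.univ : Finset V).card, Finset.univ, fun u v _ => Or.inl (Finset.mem_univ u), rfl⟩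
  -- a minimum vertex cover
  obtain ⟨Cm, hcov, hCmcard⟩ : vertexCoverNumber G ∈ Scov := Nat.sInf_mem hcovne
  have hmin : ∀ C : Finset V, (∀ u v : V, G.Adj u v → u ∈ C ∨ v ∈ C) →
      Cm.card ≤ C.card := by
    intro C hC
    rw [hCmcard]
    exact Nat.sInf_le ⟨C, hC, rfl⟩
  have hle1 : matchingNumber G ≤ vertexCoverNumber G := by
    apply csSup_le hmatne
    rintro n ⟨M, hM, hdisj, rfl⟩
    rw [← hCmcard]
    exact matching_card_le_cover_card G M hM hdisj Cm hcov
  have hle2 : vertexCoverNumber G ≤ matchingNumber G := by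
    obtain ⟨c⟩ := hbip
    set A : Finset V := Cm.filter (fun v => c v = 0) with hA
    set B : Finset V := Cm.filter (fun v => ¬ c v = 0) with hB
    have hASub : A ⊆ Cm := Finset.filter_subset _ _
    have hBSub : B ⊆ Cm := Finset.filter_subset _ _
    have hcA : ∀ a ∈ A, c a = 0 := fun a ha => (Finset.mem_filter.mp ha).2
    have fin2 : ∀ x : Fin 2, x ≠ 0 → x = 1 := by decide
    have hcB : ∀ b ∈ B, c b = 1 := fun b hb => fin2 _ (Finset.mem_filter.mp hb).2
    have hindA : ∀ a ∈ A, ∀ a' ∈ A, ¬ G.Adj a a' := by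
      intro a ha a' ha' hadj
      exact c.valid hadj (by rw [hcA a ha, hcA a' ha'])
    have hindB : ∀ b ∈ B, ∀ b' ∈ B, ¬ G.Adj b b' := by
      intro b hb b' hb' hadj
      exact c.valid hadj (by rw [hcB b hb, hcB b' hb'])
    obtain ⟨f, hfinj, hf⟩ := exists_saturating G Cm hcov hmin A hASub hindA
    obtain ⟨g, hginj, hg⟩ := exists_saturating G Cm hcov hmin B hBSub hindB
    -- colors of the partners
    have hcf : ∀ a : {x // x ∈ A}, c (f a) = 1 := by
      intro a
      exact fin2 _ (fun h => c.valid (hf a).1 (by rw [hcA a.1 a.2, h]))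
    have hcg : ∀ b : {x // x ∈ B}, c (g b) = 0 := by
      intro b
      by_contra h
      exact c.valid (hg b).1 (by rw [hcB b.1 b.2, fin2 _ h])
    set M1 : Finset (Sym2 V) := A.attach.image (fun a => s(a.1, f a)) with hM1
    set M2 : Finset (Sym2 V) := B.attach.image (fun b => s(b.1, g b)) with hM2
    have hmemM1 : ∀ e ∈ M1, ∃ a : {x // x ∈ A}, e = s(a.1, f a) := by
      intro e he
      rcases Finset.mem_image.mp he with ⟨a, _, rfl⟩
      exact ⟨a, rfl⟩
    have hmemM2 : ∀ e ∈ M2, ∃ b : {x // x ∈ B}, e = s(b.1, g b) := by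
      intro e he
      rcases Finset.mem_image.mp he with ⟨b, _, rfl⟩
      exact ⟨b, rfl⟩
    -- the cross condition
    have cross : ∀ (a : {x // x ∈ A}) (b : {x // x ∈ B}) (v : V),
        v ∈ s(a.1, f a) → v ∈ s(b.1, g b) → False := by
      intro a b v hv1 hv2
      rcases Sym2.mem_iff.mp hv1 with h1 | h1 <;>
        rcases Sym2.mem_iff.mp hv2 with h2 | h2
      · have : (0 : Fin 2) = 1 := by
          rw [← hcA a.1 a.2, ← hcB b.1 b.2, ← h1, ← h2]
        exact absurd this (by decide)
      · apply (hg b).2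
        rw [← h2, h1]
        exact hASub a.2
      · apply (hf a).2
        rw [← h1, h2]
        exact hBSub b.2
      · have : (1 : Fin 2) = 0 := by
          rw [← hcf a, ← hcg b, ← h1, ← h2]
        exact absurd this (by decide)
    have sameA : ∀ (a a' : {x // x ∈ A}) (v : V),
        v ∈ s(a.1, f a) → v ∈ s(a'.1, f a') → a = a' := by
      intro a a' v hv1 hv2
      rcases Sym2.mem_iff.mp hv1 with h1 | h1 <;>
        rcases Sym2.mem_iff.mp hv2 with h2 | h2
      · exact Subtype.ext (by rw [← h1, ← h2])
      · exfalso; apply (hf a').2; rw [← h2, h1]; exact hASub a.2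
      · exfalso; apply (hf a).2; rw [← h1, h2]; exact hASub a'.2
      · exact hfinj (by rw [← h1, ← h2])
    have sameB : ∀ (b b' : {x // x ∈ B}) (v : V),
        v ∈ s(b.1, g b) → v ∈ s(b'.1, g b') → b = b' := by
      intro b b' v hv1 hv2
      rcases Sym2.mem_iff.mp hv1 with h1 | h1 <;>
        rcases Sym2.mem_iff.mp hv2 with h2 | h2
      · exact Subtype.ext (by rw [← h1, ← h2])
      · exfalso; apply (hg b').2; rw [← h2, h1]; exact hBSub b.2
      · exfalso; apply (hg b).2; rw [← h1, h2]; exact hBSub b'.2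
      · exact hginj (by rw [← h1, ← h2])
    set M : Finset (Sym2 V) := M1 ∪ M2 with hM
    have hMedge : ↑M ⊆ G.edgeSet := by
      intro e he
      rcases Finset.mem_union.mp he with h | h
      · obtain ⟨a, rfl⟩ := hmemM1 e h
        exact (hf a).1
      · obtain ⟨b, rfl⟩ := hmemM2 e h
        exact (hg b).1
    have hMdisj : ∀ e ∈ M, ∀ e' ∈ M, e ≠ e' → ∀ v : V, ¬(v ∈ e ∧ v ∈ e') := by
      intro e he e' he' hne v ⟨hv1, hv2⟩
      rcases Finset.mem_union.mp he with h | h <;>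
        rcases Finset.mem_union.mp he' with h' | h'
      · obtain ⟨a, rfl⟩ := hmemM1 e h
        obtain ⟨a', rfl⟩ := hmemM1 e' h'
        exact hne (by rw [sameA a a' v hv1 hv2])
      · obtain ⟨a, rfl⟩ := hmemM1 e h
        obtain ⟨b, rfl⟩ := hmemM2 e' h'
        exact cross a b v hv1 hv2
      · obtain ⟨b, rfl⟩ := hmemM2 e h
        obtain ⟨a, rfl⟩ := hmemM1 e' h'
        exact cross a b v hv2 hv1
      · obtain ⟨b, rfl⟩ := hmemM2 e h
        obtain ⟨b', rfl⟩ := hmemM2 e' h'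
        exact hne (by rw [sameB b b' v hv1 hv2])
    have hM1card : M1.card = A.card := by
      rw [hM1, Finset.card_image_of_injective _ ?_, Finset.card_attach]
      intro a a' h
      have h' : s(a.1, f a) = s(a'.1, f a') := h
      exact sameA a a' a.1 (Sym2.mem_mk_left _ _) (h' ▸ Sym2.mem_mk_left _ _)
    have hM2card : M2.card = B.card := by
      rw [hM2, Finset.card_image_of_injective _ ?_, Finset.card_attach]
      intro b b' h
      have h' : s(b.1, g b) = s(b'.1, g b') := h
      exact sameB b b' b.1 (Sym2.mem_mk_left _ _) (h' ▸ Sym2.mem_mk_left _ _)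
    have hdisj12 : Disjoint M1 M2 := by
      rw [Finset.disjoint_left]
      intro e h1 h2
      obtain ⟨a, rfl⟩ := hmemM1 e h1
      obtain ⟨b, hb⟩ := hmemM2 _ h2
      exact cross a b a.1 (Sym2.mem_mk_left _ _) (hb ▸ Sym2.mem_mk_left _ _)
    have hMcard : M.card = Cm.card := by
      rw [hM, Finset.card_union_of_disjoint hdisj12, hM1card, hM2card, hA, hB]
      exact Finset.card_filter_add_card_filter_not _
    rw [← hCmcard, ← hMcard]
    exact le_csSup hbdd ⟨M, hMedge, hMdisj, rfl⟩
  exact le_antisymm hle2 hle1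
end

section
/- Let G = (V,E) be a finite simple graph without isolated vertices. Then α₁(G) + β₁(G) = |V|, where α₁(G) is the edge covering number and β₁(G) is the matching number (Gallai's theorem). -/
/-- The edge covering number of `G`: the minimum cardinality of a set of edges
whose endpoints cover all the vertices. -/
noncomputable def edgeCoverNumber {V : Type*} [Fintype V] (G : SimpleGraph V) : ℕ :=
  sInf {n | ∃ S : Finset (Sym2 V), ↑S ⊆ G.edgeSet ∧
    (∀ v : V, ∃ e ∈ S, v ∈ e) ∧ S.card = n}

open Finset


section Aux
variable {V : Type*} [Fintype V]

/-- The finset of vertices covered by a set of edges. -/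
noncomputable def coveredVerts (M : Finset (Sym2 V)) : Finset V := by
  classical exact Finset.univ.filter (fun v => ∃ e ∈ M, v ∈ e)

lemma mem_coveredVerts {M : Finset (Sym2 V)} {v : V} :
    v ∈ coveredVerts M ↔ ∃ e ∈ M, v ∈ e := by
  classical simp [coveredVerts]

lemma vset_card [DecidableEq V] {e : Sym2 V} (he : ¬ e.IsDiag) :
    (Finset.univ.filter (· ∈ e)).card = 2 := by
  classical
  induction e using Sym2.ind with
  | _ a b =>
    rw [Sym2.mk_isDiag_iff] at he
    have h : (Finset.univ.filter (· ∈ s(a, b))) = {a, b} := by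
      ext v; simp [Sym2.mem_iff]
    rw [h, Finset.card_insert_of_notMem (by simpa using he), Finset.card_singleton]

lemma coveredVerts_card {G : SimpleGraph V} {M : Finset (Sym2 V)}
    (hME : ↑M ⊆ G.edgeSet)
    (hMd : ∀ e ∈ M, ∀ f ∈ M, e ≠ f → ∀ v : V, ¬(v ∈ e ∧ v ∈ f)) :
    (coveredVerts M).card = 2 * M.card := by
  classical
  have h : coveredVerts M = M.biUnion (fun e => Finset.univ.filter (· ∈ e)) := by
    ext v; simp [coveredVerts]
  rw [h, Finset.card_biUnion]
  · rw [Finset.sum_congr rfl (fun e he => vset_card (G.not_isDiag_of_mem_edgeSet (hME he)))]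
    simp [mul_comm, Finset.sum_const]
  · intro e he f hf hef
    rw [Function.onFun, Finset.disjoint_left]
    intro v hv hv'
    simp only [Finset.mem_filter] at hv hv'
    exact hMd e he f hf hef v ⟨hv.2, hv'.2⟩

lemma matching_card_le {G : SimpleGraph V} {M : Finset (Sym2 V)}
    (hME : ↑M ⊆ G.edgeSet)
    (hMd : ∀ e ∈ M, ∀ f ∈ M, e ≠ f → ∀ v : V, ¬(v ∈ e ∧ v ∈ f)) :
    M.card ≤ matchingNumber G := by
  classical
  apply le_csSup
  · refine ⟨Fintype.card (Sym2 V), ?_⟩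
    rintro k ⟨N, -, -, rfl⟩
    exact Finset.card_le_univ N
  · exact ⟨M, hME, hMd, rfl⟩

lemma exists_max_matching (G : SimpleGraph V) :
    ∃ M : Finset (Sym2 V), ↑M ⊆ G.edgeSet ∧
      (∀ e ∈ M, ∀ f ∈ M, e ≠ f → ∀ v : V, ¬(v ∈ e ∧ v ∈ f)) ∧
      M.card = matchingNumber G := by
  classical
  have h := Nat.sSup_mem (s := {n | ∃ M : Finset (Sym2 V), ↑M ⊆ G.edgeSet ∧
      (∀ e ∈ M, ∀ f ∈ M, e ≠ f → ∀ v : V, ¬(v ∈ e ∧ v ∈ f)) ∧ M.card = n})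
    ⟨0, ∅, by simp⟩
    ⟨Fintype.card (Sym2 V), by rintro k ⟨N, -, -, rfl⟩; exact Finset.card_le_univ N⟩
  exact h

lemma cover_card_le {G : SimpleGraph V} {S : Finset (Sym2 V)}
    (hSE : ↑S ⊆ G.edgeSet) (hSc : ∀ v : V, ∃ e ∈ S, v ∈ e) :
    edgeCoverNumber G ≤ S.card :=
  Nat.sInf_le ⟨S, hSE, hSc, rfl⟩

lemma exists_min_cover (G : SimpleGraph V) (hiso : ∀ v : V, ∃ u, G.Adj u v) :
    ∃ S : Finset (Sym2 V), ↑S ⊆ G.edgeSet ∧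
      (∀ v : V, ∃ e ∈ S, v ∈ e) ∧ S.card = edgeCoverNumber G := by
  classical
  have hne : {n | ∃ S : Finset (Sym2 V), ↑S ⊆ G.edgeSet ∧
      (∀ v : V, ∃ e ∈ S, v ∈ e) ∧ S.card = n}.Nonempty := by
    refine ⟨_, Finset.univ.image (fun v => s(Classical.choose (hiso v), v)), ?_, ?_, rfl⟩
    · intro e he
      simp only [Finset.coe_image, Set.mem_image] at he
      obtain ⟨v, -, rfl⟩ := he
      exact (Classical.choose_spec (hiso v) : G.Adj _ v)
    · intro v
      exact ⟨s(Classical.choose (hiso v), v), Finset.mem_image_of_mem _ (Finset.mem_univ v),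
        by simp⟩
  exact Nat.sInf_mem hne

end Aux

/-- Gallai's theorem: for a finite simple graph without isolated vertices,
the edge covering number plus the matching number equals the number of vertices. -/
theorem gallai {V : Type*} [Fintype V] (G : SimpleGraph V)
    (hiso : ∀ v : V, ∃ u, G.Adj u v) :
    edgeCoverNumber G + matchingNumber G = Fintype.card V := by
  classical
  set n := Fintype.card V with hn
  -- Direction A: α + β ≤ n
  obtain ⟨M, hME, hMd, hMcard⟩ := exists_max_matching G
  have hcov : (coveredVerts M).card = 2 * M.card := coveredVerts_card hME hMd
  have h2b : 2 * M.card ≤ n := hcov ▸ Finset.card_le_univ _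
  have hA : edgeCoverNumber G + matchingNumber G ≤ n := by
    -- build a cover from M and one edge per uncovered vertex
    set f : V → Sym2 V := fun v => s(Classical.choose (hiso v), v) with hf
    have hfE : ∀ v, f v ∈ G.edgeSet := fun v =>
      (Classical.choose_spec (hiso v) : G.Adj _ v)
    set S : Finset (Sym2 V) := M ∪ (Finset.univ \ coveredVerts M).image f with hS
    have hSE : ↑S ⊆ G.edgeSet := by
      intro e he
      simp only [hS, Finset.coe_union, Set.mem_union, Finset.coe_image, Set.mem_image] at he
      rcases he with he | ⟨v, -, rfl⟩
      · exact hME he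
      · exact hfE v
    have hSc : ∀ v : V, ∃ e ∈ S, v ∈ e := by
      intro v
      by_cases hv : v ∈ coveredVerts M
      · obtain ⟨e, heM, hve⟩ := mem_coveredVerts.mp hv
        exact ⟨e, Finset.mem_union_left _ heM, hve⟩
      · refine ⟨f v, Finset.mem_union_right _ ?_, by simp [hf]⟩
        exact Finset.mem_image_of_mem f (by simp [hv])
    have hScard : S.card ≤ M.card + (n - 2 * M.card) := by
      calc S.card ≤ M.card + ((Finset.univ \ coveredVerts M).image f).card :=
            Finset.card_union_le _ _
        _ ≤ M.card + (Finset.univ \ coveredVerts M).card :=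
            Nat.add_le_add_left (Finset.card_image_le) _
        _ = M.card + (n - 2 * M.card) := by
            rw [Finset.card_sdiff_of_subset (Finset.subset_univ _), hcov, Finset.card_univ]
    have := cover_card_le hSE hSc
    omega
  -- Direction B: n ≤ α + β
  obtain ⟨S, hSE, hSc, hScard⟩ := exists_min_cover G hiso
  -- maximal matching inside S
  obtain ⟨M', hM'mem, hM'max⟩ := (fun s hs => by
      obtain ⟨m, hm⟩ := Finset.exists_maximal (s := s) hs
      exact ⟨m, hm.1, fun x hx hlt => not_le_of_gt hlt (hm.2 hx hlt.le)⟩ :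
      ∀ s : Finset (Finset (Sym2 V)), s.Nonempty → ∃ m ∈ s, ∀ x ∈ s, ¬ m < x)
    (S.powerset.filter (fun N => ∀ e ∈ N, ∀ f ∈ N, e ≠ f → ∀ v : V, ¬(v ∈ e ∧ v ∈ f)))
    ⟨∅, by simp⟩
  simp only [Finset.mem_filter, Finset.mem_powerset] at hM'mem
  obtain ⟨hM'S, hM'd⟩ := hM'mem
  have hM'E : ↑M' ⊆ G.edgeSet := fun e he => hSE (hM'S he)
  -- maximality: any edge of S disjoint from all of M' must be in M'
  have hmax : ∀ e ∈ S, (∀ f ∈ M', ∀ v : V, ¬(v ∈ e ∧ v ∈ f)) → e ∈ M' := by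
    intro e heS hdisj
    by_contra heM'
    apply hM'max (insert e M')
    · refine Finset.mem_filter.mpr ⟨Finset.mem_powerset.mpr ?_, ?_⟩
      · exact Finset.insert_subset heS hM'S
      · intro e1 he1 e2 he2 hne v hv
        obtain ⟨hv1, hv2⟩ := hv
        rcases Finset.mem_insert.mp he1 with h1 | h1 <;>
          rcases Finset.mem_insert.mp he2 with h2 | h2
        · exact hne (h1.trans h2.symm)
        · exact hdisj e2 h2 v ⟨by rw [← h1]; exact hv1, hv2⟩
        · exact hdisj e1 h1 v ⟨by rw [← h2]; exact hv2, hv1⟩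
        · exact hM'd e1 h1 e2 h2 hne v ⟨hv1, hv2⟩
    · exact Finset.ssubset_insert heM'
  -- each uncovered vertex maps injectively into S \ M'
  have hg : ∀ v ∈ Finset.univ \ coveredVerts M', ∃ e ∈ S \ M', v ∈ e := by
    intro v hv
    simp only [Finset.mem_sdiff, Finset.mem_univ, true_and] at hv
    obtain ⟨e, heS, hve⟩ := hSc v
    refine ⟨e, Finset.mem_sdiff.mpr ⟨heS, fun heM' => hv (mem_coveredVerts.mpr ⟨e, heM', hve⟩)⟩, hve⟩
  set g : V → Sym2 V := fun v => if h : ∃ e ∈ S \ M', v ∈ e then Classical.choose h else s(v, v)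
    with hgdef
  have hgmem : ∀ v ∈ Finset.univ \ coveredVerts M', g v ∈ S \ M' ∧ v ∈ g v := by
    intro v hv
    obtain h := hg v hv
    simp only [hgdef, dif_pos h]
    exact ⟨(Classical.choose_spec h).1, (Classical.choose_spec h).2⟩
  have hinj : Set.InjOn g ↑(Finset.univ \ coveredVerts M') := by
    intro u hu v hv huv
    by_contra hne
    obtain ⟨hgu, hug⟩ := hgmem u (by exact_mod_cast hu)
    obtain ⟨hgv, hvg⟩ := hgmem v (by exact_mod_cast hv)
    set e := g u with he
    rw [← huv] at hvg
    obtain ⟨heS, heM'⟩ := Finset.mem_sdiff.mp hgu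
    -- every vertex of e is u or v
    have heq : e = s(u, v) := (Sym2.mem_and_mem_iff hne).mp ⟨hug, hvg⟩
    have hvert : ∀ w, w ∈ e → w = u ∨ w = v := fun w hw => by
      rw [heq, Sym2.mem_iff] at hw; exact hw
    -- hence e is disjoint from M', contradicting maximality
    have : e ∈ M' := by
      apply hmax e heS
      intro f hf w ⟨hwe, hwf⟩
      have hwcov : w ∈ coveredVerts M' := mem_coveredVerts.mpr ⟨f, hf, hwf⟩
      rcases hvert w hwe with rfl | rfl
      · simp only [Finset.mem_coe, Finset.mem_sdiff, Finset.mem_univ, true_and] at hu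
        exact hu hwcov
      · simp only [Finset.mem_coe, Finset.mem_sdiff, Finset.mem_univ, true_and] at hv
        exact hv hwcov
    exact heM' this
  have huncov : (Finset.univ \ coveredVerts M').card ≤ (S \ M').card :=
    Finset.card_le_card_of_injOn g (fun v hv => (hgmem v hv).1) hinj
  have hcov' : (coveredVerts M').card = 2 * M'.card := coveredVerts_card hM'E hM'd
  have h1 : (Finset.univ \ coveredVerts M').card = n - 2 * M'.card := by
    rw [Finset.card_sdiff_of_subset (Finset.subset_univ _), hcov', Finset.card_univ]
  have h2 : (S \ M').card = S.card - M'.card := Finset.card_sdiff_of_subset hM'S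
  have h3 : M'.card ≤ S.card := Finset.card_le_card hM'S
  have h4 : 2 * M'.card ≤ n := hcov' ▸ Finset.card_le_univ _
  have h5 : M'.card ≤ matchingNumber G := matching_card_le hM'E hM'd
  omega
end

section
/- Let Δ be a simplicial complex on n vertices x₁,...,xₙ and let B be the set of minimal square-free generators (different from the squares x_i²) of its Stanley-Reisner ideal. Then the reduced Euler characteristic of Δ equals (-1)^{n-1} · Σ_{S ⊆ B, lcm(S) = x₁⋯xₙ} (-1)^{|S|}. -/
open Finset in
lemma exists_minimal_nonface {n : ℕ} {Δ : Finset (Fin n) → Prop} :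
    ∀ σ : Finset (Fin n), ¬ Δ σ →
      ∃ b, b ⊆ σ ∧ ¬Δ b ∧ ∀ τ, τ ⊂ b → Δ τ := by
  intro σ
  induction σ using Finset.strongInduction with
  | _ σ ih =>
    intro hσ
    by_cases h : ∀ τ, τ ⊂ σ → Δ τ
    · exact ⟨σ, subset_rfl, hσ, h⟩
    · push_neg at h
      obtain ⟨τ, hτ, hτ'⟩ := h
      obtain ⟨b, hb, h1, h2⟩ := ih τ hτ hτ'
      exact ⟨b, hb.trans hτ.subset, h1, h2⟩

open Finset in
lemma interval_sum {n : ℕ} (T : Finset (Fin n)) :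
    ∑ σ ∈ Finset.univ.powerset.filter (fun σ : Finset (Fin n) => T ⊆ σ), (-1 : ℤ) ^ σ.card
      = if T = Finset.univ then (-1) ^ n else 0 := by
  classical
  have hbij : ∑ σ ∈ Finset.univ.powerset.filter (fun σ : Finset (Fin n) => T ⊆ σ),
      (-1 : ℤ) ^ σ.card = ∑ τ ∈ Tᶜ.powerset, (-1 : ℤ) ^ (τ.card + T.card) := by
    refine Finset.sum_bij' (fun σ _ => σ \ T) (fun τ _ => τ ∪ T) ?_ ?_ ?_ ?_ ?_
    · intro σ hσ
      simp only [mem_filter, mem_powerset] at hσ ⊢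
      intro x hx
      simp only [mem_sdiff] at hx
      simp [hx.2]
    · intro τ hτ
      simp only [mem_powerset] at hτ
      simp only [mem_filter, mem_powerset]
      exact ⟨subset_univ _, subset_union_right⟩
    · intro σ hσ
      simp only [mem_filter, mem_powerset] at hσ
      exact Finset.sdiff_union_of_subset hσ.2
    · intro τ hτ
      simp only [mem_powerset] at hτ
      exact Finset.union_sdiff_cancel_right
        (Finset.disjoint_left.mpr fun x hx => (Finset.mem_compl.mp (hτ hx)))
    · intro σ hσ
      simp only [mem_filter, mem_powerset] at hσ
      rw [Finset.card_sdiff_of_subset hσ.2, Nat.sub_add_cancel (card_le_card hσ.2)]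
  rw [hbij]
  have : ∀ τ ∈ Tᶜ.powerset, (-1 : ℤ) ^ (τ.card + T.card)
      = (-1) ^ T.card * (-1) ^ τ.card := by
    intro τ _; rw [pow_add, mul_comm]
  rw [Finset.sum_congr rfl this, ← Finset.mul_sum,
    Finset.sum_powerset_neg_one_pow_card]
  by_cases h : T = Finset.univ
  · simp [h, (Finset.compl_eq_empty_iff _).mpr h, Finset.card_univ]
  · have : Tᶜ ≠ ∅ := fun hc => h ((Finset.compl_eq_empty_iff _).mp hc)
    simp [h, this]

open scoped Classical in
/-- Let `Δ` be a simplicial complex on the vertex set `{x₁,...,xₙ}` (`n ≥ 1`) and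
let `B` be the set of minimal non-faces of `Δ`, i.e. the minimal square-free
generators of the Stanley–Reisner ideal other than the squares.  Then the reduced
Euler characteristic of `Δ` equals
`(-1)^{n-1} · Σ_{S ⊆ B, ∪S = {x₁,...,xₙ}} (-1)^{|S|}`. -/
theorem euler_eq_cover_sum (n : ℕ) (hn : 1 ≤ n) (Δ : Finset (Fin n) → Prop)
    (hdc : ∀ σ τ : Finset (Fin n), τ ⊆ σ → Δ σ → Δ τ) :
    ∑ σ ∈ Finset.univ.powerset.filter (fun σ : Finset (Fin n) => Δ σ),
        (-1 : ℤ) ^ (σ.card + 1)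
      = (-1) ^ (n - 1) *
        ∑ S ∈ ((Finset.univ.powerset.filter
              (fun σ : Finset (Fin n) => ¬Δ σ ∧ ∀ τ : Finset (Fin n), τ ⊂ σ → Δ τ)).powerset.filter
            (fun S : Finset (Finset (Fin n)) => S.sup id = Finset.univ)),
          (-1 : ℤ) ^ S.card := by
  classical
  set B := Finset.univ.powerset.filter
    (fun σ : Finset (Fin n) => ¬Δ σ ∧ ∀ τ : Finset (Fin n), τ ⊂ σ → Δ τ) with hB
  -- Key: σ is a face iff no minimal non-face is contained in σ
  have key : ∀ σ : Finset (Fin n), Δ σ ↔ B.filter (fun b => b ⊆ σ) = ∅ := by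
    intro σ
    rw [Finset.filter_eq_empty_iff]
    constructor
    · intro h b hb hbs
      rw [hB, Finset.mem_filter] at hb
      exact hb.2.1 (hdc σ b hbs h)
    · intro h
      by_contra hσ
      obtain ⟨b, hbs, hb1, hb2⟩ := exists_minimal_nonface σ hσ
      have hbB : b ∈ B := by
        rw [hB, Finset.mem_filter]
        exact ⟨Finset.mem_powerset.mpr (Finset.subset_univ _), hb1, hb2⟩
      exact h hbB hbs
  -- indicator of being a face as an inclusion-exclusion sum
  have ind : ∀ σ : Finset (Fin n), (if Δ σ then (1 : ℤ) else 0)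
      = ∑ S ∈ B.powerset.filter (fun S => S.sup id ⊆ σ), (-1 : ℤ) ^ S.card := by
    intro σ
    have hset : B.powerset.filter (fun S => S.sup id ⊆ σ)
        = (B.filter (fun b => b ⊆ σ)).powerset := by
      ext S
      simp only [Finset.mem_filter, Finset.mem_powerset]
      constructor
      · rintro ⟨h1, h2⟩ b hb
        exact Finset.mem_filter.mpr
          ⟨h1 hb, Finset.sup_le_iff.mp (Finset.le_iff_subset.mpr h2) b hb⟩
      · intro h
        refine ⟨fun b hb => (Finset.mem_filter.mp (h hb)).1, ?_⟩
        exact Finset.le_iff_subset.mp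
          (Finset.sup_le fun b hb => Finset.le_iff_subset.mpr
            (Finset.mem_filter.mp (h hb)).2)
    rw [hset, Finset.sum_powerset_neg_one_pow_card]
    exact if_congr (key σ) rfl rfl
  -- rewrite LHS
  rw [Finset.sum_filter]
  have step : ∀ σ ∈ (Finset.univ (α := Fin n)).powerset,
      (if Δ σ then (-1 : ℤ) ^ (σ.card + 1) else 0)
      = ∑ S ∈ B.powerset, (if S.sup id ⊆ σ then (-1 : ℤ) ^ (σ.card + 1) * (-1) ^ S.card else 0) := by
    intro σ _
    rw [← Finset.sum_filter, ← Finset.mul_sum, ← ind σ]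
    by_cases h : Δ σ <;> simp [h]
  rw [Finset.sum_congr rfl step, Finset.sum_comm]
  have step2 : ∀ S ∈ B.powerset,
      (∑ σ ∈ (Finset.univ (α := Fin n)).powerset,
        if S.sup id ⊆ σ then (-1 : ℤ) ^ (σ.card + 1) * (-1) ^ S.card else 0)
      = (if S.sup id = Finset.univ then (-1 : ℤ) ^ (n + 1) * (-1) ^ S.card else 0) := by
    intro S _
    rw [← Finset.sum_filter]
    have : ∀ σ ∈ Finset.univ.powerset.filter (fun σ : Finset (Fin n) => S.sup id ⊆ σ),
        (-1 : ℤ) ^ (σ.card + 1) * (-1) ^ S.card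
        = ((-1 : ℤ) * (-1) ^ S.card) * (-1) ^ σ.card := by
      intro σ _; ring
    rw [Finset.sum_congr rfl this, ← Finset.mul_sum, interval_sum (S.sup id)]
    by_cases h : S.sup id = Finset.univ <;> simp [h] <;> ring
  rw [Finset.sum_congr rfl step2, ← Finset.sum_filter, Finset.mul_sum]
  apply Finset.sum_congr rfl
  intro S _
  have hpow : ((-1 : ℤ)) ^ (n + 1) = (-1) ^ (n - 1) := by
    obtain ⟨m, rfl⟩ := Nat.exists_eq_add_of_le hn
    have h1 : 1 + m + 1 = m + 2 := by ring
    have h2 : 1 + m - 1 = m := by omega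
    rw [h1, h2, pow_add]
    norm_num
  rw [hpow]
end

section
/- Let F be a forest in which every maximal sequence (a₁,...,a_r) of vertices, where each a_i is adjacent to a leaf of F_i := F \ N[{a₁,...,a_{i-1}}], ends with F_{r+1} having no isolated vertex (i.e., F is 'spherical'). Then the domination number of F equals the independent domination number of F: γ(F) = i(F). -/
open scoped Classical in
/-- The vertex set of `F \ N[{a₁,...,a_r}]`: the vertices of `G` not in the list
`l` and not adjacent to any vertex of `l`. -/
noncomputable def rem {V : Type*} [Fintype V] (G : SimpleGraph V) (l : List V) : Finset V :=
  Finset.univ.filter (fun v => v ∉ l ∧ ∀ a ∈ l, ¬G.Adj a v)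

/-- `b` is a leaf of the induced subgraph of `G` on `R`. -/
def leafIn {V : Type*} (G : SimpleGraph V) (R : Finset V) (b : V) : Prop :=
  b ∈ R ∧ ∃! u, u ∈ R ∧ G.Adj u b

/-- `l = (a₁,...,a_r)` is a sequence of vertices such that each `aᵢ` is a vertex of
`Fᵢ := F \ N[{a₁,...,a_{i-1}}]` adjacent to a leaf of `Fᵢ`. -/
def goodSeq {V : Type*} [Fintype V] (G : SimpleGraph V) (l : List V) : Prop :=
  ∀ i (h : i < l.length),
    l.get ⟨i, h⟩ ∈ rem G (l.take i) ∧
      ∃ b ∈ rem G (l.take i), leafIn G (rem G (l.take i)) b ∧ G.Adj (l.get ⟨i, h⟩) b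

/-- The domination number `γ(G)`. -/
noncomputable def domNumber {V : Type*} [Fintype V] (G : SimpleGraph V) : ℕ :=
  sInf {n | ∃ D : Finset V, (∀ v : V, v ∈ D ∨ ∃ u ∈ D, G.Adj u v) ∧ D.card = n}

/-- The independent domination number `i(G)`. -/
noncomputable def indDomNumber {V : Type*} [Fintype V] (G : SimpleGraph V) : ℕ :=
  sInf {n | ∃ D : Finset V, (∀ u ∈ D, ∀ v ∈ D, ¬G.Adj u v) ∧
    (∀ v : V, v ∈ D ∨ ∃ u ∈ D, G.Adj u v) ∧ D.card = n}

section Aux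
variable {V : Type*} [Fintype V] (G : SimpleGraph V)

/-- `D` dominates `R` from within `R`. -/
def Dom (R D : Finset V) : Prop :=
  D ⊆ R ∧ ∀ v ∈ R, v ∈ D ∨ ∃ u ∈ D, G.Adj u v

variable {G}

lemma mem_rem {l : List V} {v : V} :
    v ∈ rem G l ↔ v ∉ l ∧ ∀ a ∈ l, ¬G.Adj a v := by
  classical
  simp [rem]

lemma rem_nil : rem G ([] : List V) = Finset.univ := by
  ext v; simp [mem_rem]

lemma mem_rem_append {l : List V} {a v : V} :
    v ∈ rem G (l ++ [a]) ↔ v ∈ rem G l ∧ v ≠ a ∧ ¬G.Adj a v := by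
  simp only [mem_rem, List.mem_append, List.mem_singleton]
  constructor
  · rintro ⟨h1, h2⟩
    exact ⟨⟨fun h => h1 (Or.inl h), fun x hx => h2 x (Or.inl hx)⟩,
      fun h => h1 (Or.inr h), h2 a (Or.inr rfl)⟩
  · rintro ⟨⟨h1, h2⟩, h3, h4⟩
    refine ⟨?_, ?_⟩
    · rintro (h | h); exact h1 h; exact h3 h
    · rintro x (hx | hx); exact h2 x hx; exact hx ▸ h4

lemma rem_append_subset {l : List V} {a : V} : rem G (l ++ [a]) ⊆ rem G l :=
  fun v hv => (mem_rem_append.mp hv).1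

lemma goodSeq_nil : goodSeq G ([] : List V) := by
  intro i h; simp at h

lemma goodSeq_append {l : List V} {a : V} (hl : goodSeq G l)
    (ha : a ∈ rem G l) (hb : ∃ b ∈ rem G l, leafIn G (rem G l) b ∧ G.Adj a b) :
    goodSeq G (l ++ [a]) := by
  intro i h
  rcases lt_or_eq_of_le (Nat.lt_succ_iff.mp (by simpa using h)) with hi | hi
  · have ht : (l ++ [a]).take i = l.take i :=
      List.take_append_of_le_length (le_of_lt hi)
    have hg : (l ++ [a]).get ⟨i, h⟩ = l.get ⟨i, hi⟩ := by simp [List.getElem_append_left hi]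
    rw [ht, hg]
    exact hl i hi
  · subst hi
    have ht : (l ++ [a]).take l.length = l := by
      rw [List.take_append_of_le_length le_rfl, List.take_length]
    have hg : (l ++ [a]).get ⟨l.length, h⟩ = a := by
      simp
    rw [ht, hg]
    exact ⟨ha, hb⟩

lemma goodSeq_last {l : List V} {a : V} (h : goodSeq G (l ++ [a])) :
    a ∈ rem G l ∧ ∃ b ∈ rem G l, leafIn G (rem G l) b ∧ G.Adj a b := by
  have hlen : l.length < (l ++ [a]).length := by simp
  have := h l.length hlen
  have ht : (l ++ [a]).take l.length = l := by
    rw [List.take_append_of_le_length le_rfl, List.take_length]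
  have hg : (l ++ [a]).get ⟨l.length, hlen⟩ = a := by simp
  rw [ht, hg] at this
  exact this

end Aux
section Aux2
variable {V : Type*} [Fintype V] {G : SimpleGraph V}

lemma card_rem_append_lt {l : List V} {a : V} (h : goodSeq G (l ++ [a])) :
    (rem G (l ++ [a])).card < (rem G l).card := by
  obtain ⟨ha, -⟩ := goodSeq_last h
  apply Finset.card_lt_card
  refine ⟨rem_append_subset, fun hsub => ?_⟩
  have := hsub ha
  rw [mem_rem_append] at this
  exact this.2.1 rfl

/-- In a spherical graph, no reachable remainder has an isolated vertex. -/
lemma no_isolated (hsph : ∀ l : List V, goodSeq G l → (∀ a : V, ¬goodSeq G (l ++ [a])) →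
      ∀ v ∈ rem G l, ∃ u ∈ rem G l, G.Adj u v) :
    ∀ l : List V, goodSeq G l → ∀ v ∈ rem G l, ∃ u ∈ rem G l, G.Adj u v := by
  have H : ∀ n (l : List V), (rem G l).card = n → goodSeq G l →
      ∀ v ∈ rem G l, ∃ u ∈ rem G l, G.Adj u v := by
    intro n
    induction n using Nat.strong_induction_on with
    | _ n ih =>
      intro l hcard hl v hv
      by_contra hiso
      push_neg at hiso
      by_cases hex : ∃ a, goodSeq G (l ++ [a])
      · obtain ⟨a, hga⟩ := hex
        have hlt := card_rem_append_lt hga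
        obtain ⟨ha, b, hb, hleaf, hadj⟩ := goodSeq_last hga
        -- v ≠ a since a has a neighbor b in rem G l but v is isolated
        have hva : v ≠ a := by
          rintro rfl
          exact hiso b hb hadj.symm
        have hvmem : v ∈ rem G (l ++ [a]) :=
          mem_rem_append.mpr ⟨hv, hva, fun h => hiso a ha h⟩
        have := ih (rem G (l ++ [a])).card (hcard ▸ hlt) (l ++ [a]) rfl hga v hvmem
        obtain ⟨u, hu, hadju⟩ := this
        exact hiso u (rem_append_subset hu) hadju
      · push_neg at hex
        obtain ⟨u, hu, hadju⟩ := hsph l hl hex v hv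
        exact hiso u hu hadju
  exact fun l => H (rem G l).card l rfl

end Aux2
section MaxPath
variable {V : Type*} [Fintype V] {G : SimpleGraph V}

open SimpleGraph

/-- In an acyclic graph, any two paths with the same endpoints coincide. -/
lemma walk_eq_of_isPath (hac : G.IsAcyclic) {a b : V} {w₁ w₂ : G.Walk a b}
    (h₁ : w₁.IsPath) (h₂ : w₂.IsPath) : w₁ = w₂ := by
  have := (SimpleGraph.isAcyclic_iff_path_unique.mp hac) ⟨w₁, h₁⟩ ⟨w₂, h₂⟩
  exact congrArg Subtype.val this

/-- If `d` is adjacent to the start of a path and lies in its support, then `d` is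
the second vertex. -/
lemma eq_snd_of_adj_of_mem_support (hac : G.IsAcyclic) {a b c d : V}
    (h : G.Adj a c) (q : G.Walk c b) (hp : (SimpleGraph.Walk.cons h q).IsPath)
    (had : G.Adj a d) (hd : d ∈ (SimpleGraph.Walk.cons h q).support) : d = c := by
  classical
  have t := (SimpleGraph.Walk.cons h q).takeUntil d hd
  have htp : ((SimpleGraph.Walk.cons h q).takeUntil d hd).IsPath := hp.takeUntil hd
  have hedge : (SimpleGraph.Walk.cons had (SimpleGraph.Walk.nil)).IsPath := by
    simp [SimpleGraph.Walk.cons_isPath_iff, had.ne]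
  have heq := walk_eq_of_isPath hac htp hedge
  have hspec := SimpleGraph.Walk.take_spec (SimpleGraph.Walk.cons h q) hd
  have hsupp := congrArg SimpleGraph.Walk.support hspec
  rw [SimpleGraph.Walk.support_append, heq] at hsupp
  simp only [SimpleGraph.Walk.support_cons, SimpleGraph.Walk.support_nil] at hsupp
  -- hsupp : [a, d] ++ tail = a :: q.support
  have : d :: ((SimpleGraph.Walk.cons h q).dropUntil d hd).support.tail = q.support := by
    simpa using hsupp
  have hq := SimpleGraph.Walk.support_eq_cons q
  rw [hq] at this
  exact (List.cons.injEq _ _ _ _ ▸ this).1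

end MaxPath
section MaxPath2
variable {V : Type*} [Fintype V] {G : SimpleGraph V}

open SimpleGraph Walk

lemma exists_structured_leaf (hac : G.IsAcyclic) {R : Finset V}
    (hedge : ∃ x ∈ R, ∃ y ∈ R, G.Adj x y) :
    ∃ v₀ ∈ R, ∃ v₁ ∈ R, ∃ v₂ ∈ R, ∃ v₃ : V,
      G.Adj v₁ v₀ ∧ G.Adj v₁ v₂ ∧
      (∀ w ∈ R, G.Adj w v₀ → w = v₁) ∧
      (∀ w ∈ R, G.Adj v₁ w → w = v₂ ∨ ∀ t ∈ R, G.Adj t w → t = v₁) ∧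
      (∀ w ∈ R, G.Adj v₂ w → w = v₁ ∨ w = v₃ ∨
        (∀ t ∈ R, G.Adj t w → t = v₂) ∨
        (∃ t ∈ R, G.Adj w t ∧ t ≠ v₂ ∧ ∀ u ∈ R, G.Adj u t → u = w)) := by
  classical
  set PS : Set ℕ := {n | ∃ (x y : V) (p : G.Walk x y), p.IsPath ∧
    (∀ z ∈ p.support, z ∈ R) ∧ p.length = n} with hPS
  obtain ⟨x, hx, y, hy, hxy⟩ := hedge
  have h1 : (1 : ℕ) ∈ PS := by
    refine ⟨x, y, Walk.cons hxy Walk.nil, ?_, ?_, by simp⟩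
    · simp [Walk.cons_isPath_iff, hxy.ne]
    · intro z hz
      simp only [Walk.support_cons, Walk.support_nil, List.mem_cons,
        List.mem_singleton, List.not_mem_nil, or_false] at hz
      rcases hz with rfl | rfl
      · exact hx
      · exact hy
  have hbdd : BddAbove PS := by
    refine ⟨Fintype.card V, fun n hn => ?_⟩
    obtain ⟨_, _, p, hp, _, hl⟩ := hn
    exact hl ▸ le_of_lt hp.length_lt
  have hkmem : sSup PS ∈ PS := Nat.sSup_mem ⟨1, h1⟩ hbdd
  set k := sSup PS with hkdef
  have hmax : ∀ {a b : V} (w : G.Walk a b), w.IsPath →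
      (∀ z ∈ w.support, z ∈ R) → w.length ≤ k :=
    fun w hw hs => le_csSup hbdd ⟨_, _, w, hw, hs, rfl⟩
  obtain ⟨v₀, yy, p, hp, hsupR, hlen⟩ := hkmem
  have hk1 : 1 ≤ k := le_csSup hbdd h1
  clear hx hy hxy h1
  cases p with
  | nil => simp at hlen; omega
  | @cons _ v₁ _ h q =>
    have hv₀R : v₀ ∈ R := hsupR v₀ (Walk.start_mem_support _)
    have hv₁R : v₁ ∈ R := hsupR v₁ (by simp)
    have hqsup : ∀ z ∈ q.support, z ∈ R := fun z hz => hsupR z (by simp [hz])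
    have hqp : q.IsPath := hp.of_cons
    have hv₀nq : v₀ ∉ q.support := ((Walk.cons_isPath_iff h q).mp hp).2
    -- F1 : every `R`-neighbor of v₀ is v₁
    have F1 : ∀ w ∈ R, G.Adj w v₀ → w = v₁ := by
      intro w hw hadj
      by_cases hmem : w ∈ (Walk.cons h q).support
      · exact eq_snd_of_adj_of_mem_support hac h q hp hadj.symm hmem
      · exfalso
        have hW : (Walk.cons hadj (Walk.cons h q)).IsPath :=
          (Walk.cons_isPath_iff _ _).mpr ⟨hp, hmem⟩
        have hWs : ∀ z ∈ (Walk.cons hadj (Walk.cons h q)).support, z ∈ R := by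
          intro z hz
          simp only [Walk.support_cons, List.mem_cons] at hz ⊢
          rcases hz with rfl | hz
          · exact hw
          · exact hsupR z (by simpa using hz)
        have := hmax _ hW hWs
        simp only [Walk.length_cons] at this hlen
        omega
    cases q with
    | nil =>
      -- k = 1 : every neighbor of the middle vertex is a leaf
      have hk : k = 1 := by simpa using hlen.symm
      refine ⟨v₀, hv₀R, yy, hv₁R, v₀, hv₀R, v₀, h.symm, h.symm, F1, ?_, ?_⟩
      · -- N3 : every neighbor of yy other than v₀ is a leaf
        intro w hw hadj
        by_cases hw0 : w = v₀
        · exact Or.inl hw0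
        right
        intro t ht hadjt
        by_contra htne
        have hwy : w ≠ yy := hadj.ne'
        have htw : t ≠ w := hadjt.ne
        have ht0 : t ≠ v₀ := by
          intro h0
          subst h0
          exact hwy (F1 w hw hadjt.symm)
        -- build the path t - w - yy - v₀ of length 3 > 1
        have h3 : (Walk.cons h.symm Walk.nil : G.Walk yy v₀).IsPath := by
          simp [Walk.cons_isPath_iff, h.ne']
        have h2 : (Walk.cons hadj.symm (Walk.cons h.symm Walk.nil)).IsPath :=
          (Walk.cons_isPath_iff _ _).mpr ⟨h3, by
            simp only [Walk.support_cons, Walk.support_nil, List.mem_cons,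
              List.not_mem_nil, or_false, not_or]
            exact ⟨hadj.ne', hw0⟩⟩
        have hW : (Walk.cons hadjt (Walk.cons hadj.symm
            (Walk.cons h.symm Walk.nil))).IsPath :=
          (Walk.cons_isPath_iff _ _).mpr ⟨h2, by
            simp only [Walk.support_cons, Walk.support_nil, List.mem_cons,
              List.not_mem_nil, or_false, not_or]
            exact ⟨htw, htne, ht0⟩⟩
        have hWs : ∀ z ∈ (Walk.cons hadjt (Walk.cons hadj.symm
            (Walk.cons h.symm Walk.nil))).support, z ∈ R := by
          intro z hz
          simp only [Walk.support_cons, Walk.support_nil, List.mem_cons,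
            List.mem_singleton, List.not_mem_nil, or_false] at hz
          rcases hz with rfl | rfl | rfl | rfl
          · exact ht
          · exact hw
          · exact hv₁R
          · exact hv₀R
        have := hmax _ hW hWs
        simp only [Walk.length_cons, Walk.length_nil] at this
        omega
      · -- N4 : every neighbor of v₀ is yy
        intro w hw hadj
        exact Or.inl (F1 w hw hadj.symm)
    | @cons _ v₂ _ h' q₂ =>
      have hv₂R : v₂ ∈ R := hqsup v₂ (by simp)
      have hq₂sup : ∀ z ∈ q₂.support, z ∈ R := fun z hz => hqsup z (by simp [hz])
      have hq₂p : q₂.IsPath := hqp.of_cons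
      have hv₁nq₂ : v₁ ∉ q₂.support := ((Walk.cons_isPath_iff h' q₂).mp hqp).2
      have hv₀v₂ : v₀ ≠ v₂ := by
        intro hc; exact hv₀nq (by simp [hc])
      have hv₀nq₂ : v₀ ∉ q₂.support := fun hc => hv₀nq (by simp [hc])
      have hlen2 : q₂.length + 2 = k := by simpa using hlen
      -- N3
      have N3 : ∀ w ∈ R, G.Adj v₁ w → w = v₂ ∨ ∀ t ∈ R, G.Adj t w → t = v₁ := by
        intro w hw hadj
        by_cases hw2 : w = v₂
        · exact Or.inl hw2
        right
        by_cases hw0 : w = v₀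
        · intro t ht hadjt
          exact F1 t ht (hw0 ▸ hadjt)
        -- here w ∉ support p
        have hwnq : w ∉ Walk.support (Walk.cons h' q₂) := by
          intro hmem
          exact hw2 (eq_snd_of_adj_of_mem_support hac h' q₂ hqp hadj hmem)
        intro t ht hadjt
        by_contra htne
        have htw : t ≠ w := hadjt.ne
        have ht0 : t ≠ v₀ := by
          intro h0
          subst h0
          exact hadj.ne' (F1 w hw hadjt.symm)
        by_cases htq : t ∈ Walk.support (Walk.cons h' q₂)
        · -- cycle : compare the path v₁ → t along q with v₁ - w - t
          have hB : (Walk.cons hadj (Walk.cons hadjt.symm Walk.nil)).IsPath := by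
            refine (Walk.cons_isPath_iff _ _).mpr ⟨?_, ?_⟩
            · simp [Walk.cons_isPath_iff, htw.symm]
            · simp only [Walk.support_cons, Walk.support_nil, List.mem_cons,
                List.not_mem_nil, or_false, not_or]
              exact ⟨hadj.ne, fun hc => htne hc.symm⟩
          have hA : ((Walk.cons h' q₂).takeUntil t htq).IsPath := hqp.takeUntil htq
          have heq := walk_eq_of_isPath hac hA hB
          have : w ∈ ((Walk.cons h' q₂).takeUntil t htq).support := by
            rw [heq]; simp
          exact hwnq (Walk.support_takeUntil_subset _ htq this)
        · -- longer path t - w - v₁ - (q)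
          have h2 : (Walk.cons hadj.symm (Walk.cons h' q₂)).IsPath :=
            (Walk.cons_isPath_iff _ _).mpr ⟨hqp, hwnq⟩
          have hW : (Walk.cons hadjt (Walk.cons hadj.symm
              (Walk.cons h' q₂))).IsPath :=
            (Walk.cons_isPath_iff _ _).mpr ⟨h2, by
              simp only [Walk.support_cons, List.mem_cons, not_or]
              refine ⟨htw, ?_⟩
              simpa using htq⟩
          have hWs : ∀ z ∈ (Walk.cons hadjt (Walk.cons hadj.symm
              (Walk.cons h' q₂))).support, z ∈ R := by
            intro z hz
            simp only [Walk.support_cons, List.mem_cons] at hz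
            rcases hz with rfl | rfl | hz
            · exact ht
            · exact hw
            · exact hqsup z (by simpa using hz)
          have := hmax _ hW hWs
          simp only [Walk.length_cons] at this
          omega
      cases q₂ with
      | nil =>
        -- k = 2 : the only neighbor of yy is v₁
        refine ⟨v₀, hv₀R, v₁, hv₁R, yy, hv₂R, v₀, h.symm, h', F1, N3, ?_⟩
        intro w hw hadj
        left
        by_contra hw1
        have hw2 : w ≠ yy := hadj.ne'
        have hw0 : w ≠ v₀ := by
          intro h0
          subst h0
          exact h'.ne (F1 yy hv₂R hadj).symm
        have hwns : w ∉ (Walk.cons h (Walk.cons h' Walk.nil)).support := by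
          simp only [Walk.support_cons, Walk.support_nil, List.mem_cons,
            List.not_mem_nil, or_false, not_or]
          exact ⟨fun hc => hw0 hc, fun hc => hw1 hc, fun hc => hw2 hc⟩
        have hrev : ((Walk.cons h (Walk.cons h' Walk.nil)).reverse).IsPath :=
          hp.reverse
        have hW : (Walk.cons hadj.symm
            ((Walk.cons h (Walk.cons h' Walk.nil)).reverse)).IsPath :=
          (Walk.cons_isPath_iff _ _).mpr ⟨hrev, by
            rw [Walk.support_reverse]
            simp only [Walk.support_cons, Walk.support_nil, List.mem_cons,
              List.not_mem_nil, or_false, not_or] at hwns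
            simpa using ⟨hwns.2.2, hwns.2.1, hwns.1⟩⟩
        have hWs : ∀ z ∈ (Walk.cons hadj.symm
            ((Walk.cons h (Walk.cons h' Walk.nil)).reverse)).support, z ∈ R := by
          intro z hz
          simp only [Walk.support_cons, List.mem_cons] at hz
          rcases hz with rfl | hz
          · exact hw
          · rw [Walk.support_reverse] at hz
            exact hsupR z (by simpa using List.mem_reverse.mp hz)
        have := hmax _ hW hWs
        simp only [Walk.length_cons, Walk.length_reverse] at this
        simp only [Walk.length_cons, Walk.length_nil] at hlen
        omega
      | @cons _ v₃ _ h'' q₃ =>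
        have hv₃R : v₃ ∈ R := hq₂sup v₃ (by simp)
        refine ⟨v₀, hv₀R, v₁, hv₁R, v₂, hv₂R, v₃, h.symm, h', F1, N3, ?_⟩
        intro w hw hadj
        by_cases hw1 : w = v₁
        · exact Or.inl hw1
        by_cases hw3 : w = v₃
        · exact Or.inr (Or.inl hw3)
        right; right
        have hw0 : w ≠ v₀ := by
          intro h0; subst h0
          exact h'.ne (F1 v₂ hv₂R hadj).symm
        have hw2 : w ≠ v₂ := hadj.ne'
        have hwnq₂ : w ∉ (Walk.cons h'' q₃).support := fun hmem =>
          hw3 (eq_snd_of_adj_of_mem_support hac h'' q₃ hq₂p hadj hmem)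
        by_cases hLf : ∀ t ∈ R, G.Adj t w → t = v₂
        · exact Or.inl hLf
        right
        push_neg at hLf
        obtain ⟨t, ht, hadjt, htne⟩ := hLf
        have htw : t ≠ w := hadjt.ne
        have ht0 : t ≠ v₀ := by
          intro h0; subst h0
          exact hw1 (F1 w hw hadjt.symm)
        have ht1 : t ≠ v₁ := by
          intro h1; subst h1
          rcases N3 w hw hadjt with hc | hleaf
          · exact hw2 hc
          · exact h'.ne (hleaf v₂ hv₂R hadj).symm
        -- B : path v₂ - w - t
        have hB : (Walk.cons hadj (Walk.cons hadjt.symm Walk.nil)).IsPath := by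
          refine (Walk.cons_isPath_iff _ _).mpr ⟨?_, ?_⟩
          · simp [Walk.cons_isPath_iff, htw.symm]
          · simp only [Walk.support_cons, Walk.support_nil, List.mem_cons,
              List.not_mem_nil, or_false, not_or]
            exact ⟨hadj.ne, fun hc => htne hc.symm⟩
        have htnq₂ : t ∉ (Walk.cons h'' q₃).support := by
          intro htq
          have hA : ((Walk.cons h'' q₃).takeUntil t htq).IsPath := hq₂p.takeUntil htq
          have heq := walk_eq_of_isPath hac hA hB
          have hmem : w ∈ ((Walk.cons h'' q₃).takeUntil t htq).support := by
            rw [heq]; simp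
          exact hwnq₂ (Walk.support_takeUntil_subset _ htq hmem)
        refine ⟨t, ht, hadjt.symm, htne, ?_⟩
        intro u hu hadju
        by_contra hune
        have hut : u ≠ t := hadju.ne
        have hu0 : u ≠ v₀ := by
          intro h0; subst h0
          exact ht1 (F1 t ht hadju.symm)
        have hu1 : u ≠ v₁ := by
          intro h1; subst h1
          rcases N3 t ht hadju with hc | hleaf
          · exact htne hc
          · exact hw1 (hleaf w hw hadjt.symm)
        have hu2 : u ≠ v₂ := by
          intro h2; subst h2
          have hE : (Walk.cons hadju Walk.nil).IsPath := by
            simp [Walk.cons_isPath_iff, hadju.ne]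
          have heq := walk_eq_of_isPath hac hE hB
          have := congrArg Walk.support heq
          simp at this
        have hunq₂ : u ∉ (Walk.cons h'' q₃).support := by
          intro huq
          have hB₂ : (Walk.cons hadj (Walk.cons hadjt.symm
              (Walk.cons hadju.symm Walk.nil))).IsPath := by
            refine (Walk.cons_isPath_iff _ _).mpr ⟨?_, ?_⟩
            · refine (Walk.cons_isPath_iff _ _).mpr ⟨?_, ?_⟩
              · simp [Walk.cons_isPath_iff, hut.symm]
              · simp only [Walk.support_cons, Walk.support_nil, List.mem_cons,
                  List.not_mem_nil, or_false, not_or]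
                exact ⟨htw.symm, fun hc => hune hc.symm⟩
            · simp only [Walk.support_cons, Walk.support_nil, List.mem_cons,
                List.not_mem_nil, or_false, not_or]
              exact ⟨hadj.ne, fun hc => htne hc.symm, fun hc => hu2 hc.symm⟩
          have hA : ((Walk.cons h'' q₃).takeUntil u huq).IsPath := hq₂p.takeUntil huq
          have heq := walk_eq_of_isPath hac hA hB₂
          have hmem : w ∈ ((Walk.cons h'' q₃).takeUntil u huq).support := by
            rw [heq]; simp
          exact hwnq₂ (Walk.support_takeUntil_subset _ huq hmem)
        -- the long path u - t - w - v₂ - q₂ of length k + 1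
        have h2 : (Walk.cons hadj.symm (Walk.cons h'' q₃)).IsPath :=
          (Walk.cons_isPath_iff _ _).mpr ⟨hq₂p, hwnq₂⟩
        have h3 : (Walk.cons hadjt (Walk.cons hadj.symm (Walk.cons h'' q₃))).IsPath :=
          (Walk.cons_isPath_iff _ _).mpr ⟨h2, by
            simp only [Walk.support_cons, List.mem_cons, not_or]
            exact ⟨htw, by simpa using htnq₂⟩⟩
        have hW : (Walk.cons hadju (Walk.cons hadjt
            (Walk.cons hadj.symm (Walk.cons h'' q₃)))).IsPath :=
          (Walk.cons_isPath_iff _ _).mpr ⟨h3, by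
            simp only [Walk.support_cons, List.mem_cons, not_or]
            exact ⟨hut, hune, by simpa using hunq₂⟩⟩
        have hWs : ∀ z ∈ (Walk.cons hadju (Walk.cons hadjt
            (Walk.cons hadj.symm (Walk.cons h'' q₃)))).support, z ∈ R := by
          intro z hz
          simp only [Walk.support_cons, List.mem_cons] at hz
          rcases hz with rfl | rfl | rfl | hz
          · exact hu
          · exact ht
          · exact hw
          · exact hq₂sup z (by simpa using hz)
        have := hmax _ hW hWs
        simp only [Walk.length_cons] at this hlen2
        omega
end MaxPath2
section Step
variable {V : Type*} [Fintype V] {G : SimpleGraph V}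

/-- A leaf neighbor of a vertex of a minimum dominating set is not in the set. -/
lemma leaf_not_mem_min {R : Finset V} {v₁ : V} {E : Finset V}
    (hE : Dom G R E) (hmin : ∀ E', Dom G R E' → E.card ≤ E'.card) (hv₁E : v₁ ∈ E)
    {w : V} (hadj : G.Adj v₁ w) (hleaf : ∀ t ∈ R, G.Adj t w → t = v₁) : w ∉ E := by
  classical
  intro hwE
  have hdom : Dom G R (E.erase w) := by
    constructor
    · exact (Finset.erase_subset _ _).trans hE.1
    · intro v hv
      rcases hE.2 v hv with hvE | ⟨u, huE, hadju⟩
      · by_cases hvw : v = w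
        · subst hvw
          exact Or.inr ⟨v₁, Finset.mem_erase.mpr ⟨hadj.ne, hv₁E⟩, hadj⟩
        · exact Or.inl (Finset.mem_erase.mpr ⟨hvw, hvE⟩)
      · by_cases huw : u = w
        · subst huw
          have : v = v₁ := hleaf v hv hadju.symm
          subst this
          exact Or.inl (Finset.mem_erase.mpr ⟨hadj.ne, hv₁E⟩)
        · exact Or.inr ⟨u, Finset.mem_erase.mpr ⟨huw, huE⟩, hadju⟩
  have h1 := hmin _ hdom
  have h2 : (E.erase w).card = E.card - 1 := Finset.card_erase_of_mem hwE
  have h3 : 1 ≤ E.card := Finset.card_pos.mpr ⟨w, hwE⟩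
  omega

open scoped Classical in
/-- Removing `v₁` from a dominating set none of whose members is adjacent to `v₁`
gives a dominating set of the remainder. -/
lemma erase_dom {l : List V} {v₁ : V} {E : Finset V}
    (hE : Dom G (rem G l) E) (hv₁E : v₁ ∈ E)
    (hnadj : ∀ u ∈ E, ¬G.Adj v₁ u) : Dom G (rem G (l ++ [v₁])) (E.erase v₁) := by
  classical
  constructor
  · intro u hu
    obtain ⟨huv, huE⟩ := Finset.mem_erase.mp hu
    exact mem_rem_append.mpr ⟨hE.1 huE, huv, hnadj u huE⟩
  · intro v hv
    obtain ⟨hvR, hvne, hvnadj⟩ := mem_rem_append.mp hv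
    rcases hE.2 v hvR with hvE | ⟨u, huE, hadju⟩
    · exact Or.inl (Finset.mem_erase.mpr ⟨hvne, hvE⟩)
    · have huv₁ : u ≠ v₁ := by
        rintro rfl
        exact hvnadj hadju
      exact Or.inr ⟨u, Finset.mem_erase.mpr ⟨huv₁, huE⟩, hadju⟩

/-- The key step: if the remainder is nonempty, we can extend the good sequence by a
support vertex and decrease the domination number. -/
lemma step_lemma (hac : G.IsAcyclic)
    (hsph : ∀ l : List V, goodSeq G l → (∀ a : V, ¬goodSeq G (l ++ [a])) →
      ∀ v ∈ rem G l, ∃ u ∈ rem G l, G.Adj u v)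
    {l : List V} (hl : goodSeq G l) (hne : (rem G l).Nonempty)
    {D : Finset V} (hD : Dom G (rem G l) D) :
    ∃ a, goodSeq G (l ++ [a]) ∧
      ∃ D' : Finset V, Dom G (rem G (l ++ [a])) D' ∧ D'.card < D.card := by
  classical
  set R := rem G l with hR
  have INV := no_isolated hsph
  obtain ⟨v, hv⟩ := hne
  obtain ⟨u, hu, hadjuv⟩ := INV l hl v hv
  obtain ⟨v₀, hv₀R, v₁, hv₁R, v₂, hv₂R, v₃, h10, h12, F1, N3, N4⟩ :=
    exists_structured_leaf hac (R := R) ⟨u, hu, v, hv, hadjuv⟩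
  have hgood : goodSeq G (l ++ [v₁]) := by
    refine goodSeq_append hl hv₁R ⟨v₀, hv₀R, ⟨hv₀R, ?_⟩, h10⟩
    exact ⟨v₁, ⟨hv₁R, h10⟩, fun u' hu' => F1 u' hu'.1 hu'.2⟩
  refine ⟨v₁, hgood, ?_⟩
  -- a minimum dominating set
  have hRR : Dom G R R := ⟨le_refl _, fun v hv => Or.inl hv⟩
  obtain ⟨Dm, hDmmem, hDmmin⟩ := Finset.exists_min_image
    ((Finset.univ : Finset (Finset V)).filter (fun E => Dom G R E)) Finset.card
    ⟨R, Finset.mem_filter.mpr ⟨Finset.mem_univ _, hRR⟩⟩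
  have hDm : Dom G R Dm := (Finset.mem_filter.mp hDmmem).2
  have hmin : ∀ E, Dom G R E → Dm.card ≤ E.card := fun E hE =>
    hDmmin E (Finset.mem_filter.mpr ⟨Finset.mem_univ _, hE⟩)
  have hDmD : Dm.card ≤ D.card := hmin D hD
  -- normalize so that v₁ belongs to the minimum dominating set
  obtain ⟨D₁, hD₁, hv₁D₁, hD₁card⟩ :
      ∃ D₁, Dom G R D₁ ∧ v₁ ∈ D₁ ∧ D₁.card ≤ Dm.card := by
    by_cases hv₁Dm : v₁ ∈ Dm
    · exact ⟨Dm, hDm, hv₁Dm, le_refl _⟩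
    · have hv₀Dm : v₀ ∈ Dm := by
        rcases hDm.2 v₀ hv₀R with h0 | ⟨u', hu', hadj'⟩
        · exact h0
        · exact absurd ((F1 u' (hDm.1 hu') hadj') ▸ hu') hv₁Dm
      refine ⟨insert v₁ (Dm.erase v₀), ⟨?_, ?_⟩, Finset.mem_insert_self _ _, ?_⟩
      · intro z hz
        rcases Finset.mem_insert.mp hz with rfl | hz
        · exact hv₁R
        · exact hDm.1 (Finset.mem_of_mem_erase hz)
      · intro z hz
        rcases hDm.2 z hz with hzDm | ⟨u', hu', hadj'⟩
        · by_cases hz0 : z = v₀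
          · subst hz0
            exact Or.inr ⟨v₁, Finset.mem_insert_self _ _, h10⟩
          · exact Or.inl (Finset.mem_insert_of_mem (Finset.mem_erase.mpr ⟨hz0, hzDm⟩))
        · by_cases hu0 : u' = v₀
          · subst hu0
            have : z = v₁ := F1 z hz hadj'.symm
            exact Or.inl (this ▸ Finset.mem_insert_self _ _)
          · exact Or.inr ⟨u', Finset.mem_insert_of_mem
              (Finset.mem_erase.mpr ⟨hu0, hu'⟩), hadj'⟩
      · calc (insert v₁ (Dm.erase v₀)).card ≤ (Dm.erase v₀).card + 1 :=
              Finset.card_insert_le _ _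
          _ = Dm.card := by rw [Finset.card_erase_of_mem hv₀Dm]
                            have : 1 ≤ Dm.card := Finset.card_pos.mpr ⟨v₀, hv₀Dm⟩
                            omega
  have hmin₁ : ∀ E, Dom G R E → D₁.card ≤ E.card := fun E hE =>
    le_trans hD₁card (hmin E hE)
  have hinv' : ∀ z ∈ rem G (l ++ [v₁]), ∃ u' ∈ rem G (l ++ [v₁]), G.Adj u' z :=
    INV _ hgood
  by_cases hc : v₂ ∈ D₁
  · -- hard case : v₂ lies in the minimum dominating set
    set E₀ := D₁.erase v₂ with hE₀
    have hv₁E₀ : v₁ ∈ E₀ := Finset.mem_erase.mpr ⟨h12.ne, hv₁D₁⟩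
    have hE₀sub : E₀ ⊆ R := (Finset.erase_subset _ _).trans hD₁.1
    have hform : ∀ z, z ∈ R → z ∉ E₀ → (∀ u' ∈ E₀, ¬G.Adj u' z) → z = v₃ := by
      intro z hzR hz1 hz2
      have hnadj1 : ¬G.Adj v₁ z := hz2 v₁ hv₁E₀
      have hzv₁ : z ≠ v₁ := fun h => (h ▸ hz1) hv₁E₀
      have hz₂ : z ≠ v₂ := by rintro rfl; exact hnadj1 h12
      have hzD : z ∉ D₁ := fun hzD => hz1 (Finset.mem_erase.mpr ⟨hz₂, hzD⟩)
      have hadj2z : G.Adj v₂ z := by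
        rcases hD₁.2 z hzR with h | ⟨u', hu', ha⟩
        · exact absurd h hzD
        · have : u' = v₂ := by
            by_contra hne'
            exact hz2 u' (Finset.mem_erase.mpr ⟨hne', hu'⟩) ha
          exact this ▸ ha
      rcases N4 z hzR hadj2z with h1' | h3' | hleaf | ⟨t, htR, hadjzt, htne, huniq⟩
      · exact absurd h1' hzv₁
      · exact h3'
      · exfalso
        have hzR' : z ∈ rem G (l ++ [v₁]) :=
          mem_rem_append.mpr ⟨hzR, hzv₁, hnadj1⟩
        obtain ⟨u', hu', ha⟩ := hinv' z hzR'
        have h2u := hleaf u' (rem_append_subset hu') ha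
        subst h2u
        exact (mem_rem_append.mp hu').2.2 h12
      · exfalso
        have htD : t ∉ D₁ := by
          intro htD
          exact hz2 t (Finset.mem_erase.mpr ⟨htne, htD⟩) hadjzt.symm
        rcases hD₁.2 t htR with h | ⟨u', hu', ha⟩
        · exact htD h
        · have := huniq u' (hD₁.1 hu') ha
          subst this
          exact hzD hu'
    by_cases hU : ∀ z ∈ R, z ∈ E₀ ∨ ∃ u' ∈ E₀, G.Adj u' z
    · exfalso
      have := hmin₁ E₀ ⟨hE₀sub, hU⟩
      have h2 : E₀.card = D₁.card - 1 := Finset.card_erase_of_mem hc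
      have h3 : 1 ≤ D₁.card := Finset.card_pos.mpr ⟨v₂, hc⟩
      omega
    · push_neg at hU
      obtain ⟨x, hxR, hx1, hx2⟩ := hU
      set D₂ := insert x E₀ with hD₂def
      have hD₂ : Dom G R D₂ := by
        constructor
        · exact Finset.insert_subset hxR hE₀sub
        · intro z hz
          by_cases hzd : z ∈ E₀ ∨ ∃ u' ∈ E₀, G.Adj u' z
          · rcases hzd with h | ⟨u', hu', ha⟩
            · exact Or.inl (Finset.mem_insert_of_mem h)
            · exact Or.inr ⟨u', Finset.mem_insert_of_mem hu', ha⟩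
          · push_neg at hzd
            have hz3 := hform z hz hzd.1 hzd.2
            have hx3 := hform x hxR hx1 hx2
            exact Or.inl ((hz3.trans hx3.symm) ▸ Finset.mem_insert_self _ _)
      have hD₂card : D₂.card ≤ D₁.card := by
        have h2 : E₀.card = D₁.card - 1 := Finset.card_erase_of_mem hc
        have h3 : 1 ≤ D₁.card := Finset.card_pos.mpr ⟨v₂, hc⟩
        calc D₂.card ≤ E₀.card + 1 := Finset.card_insert_le _ _
          _ = D₁.card := by omega
      have hmin₂ : ∀ E, Dom G R E → D₂.card ≤ E.card := fun E hE =>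
        le_trans hD₂card (hmin₁ E hE)
      have hv₁D₂ : v₁ ∈ D₂ := Finset.mem_insert_of_mem hv₁E₀
      have hnadj₂ : ∀ u' ∈ D₂, ¬G.Adj v₁ u' := by
        intro u' hu' hadj'
        rcases Finset.mem_insert.mp hu' with rfl | hu'
        · exact hx2 v₁ hv₁E₀ hadj'
        · rcases N3 u' (hE₀sub hu') hadj' with h2' | hleaf
          · exact (Finset.mem_erase.mp hu').1 h2'
          · exact (leaf_not_mem_min hD₂ hmin₂ hv₁D₂ hadj' hleaf)
              (Finset.mem_insert_of_mem hu')
      refine ⟨D₂.erase v₁, erase_dom hD₂ hv₁D₂ hnadj₂, ?_⟩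
      have h2 : (D₂.erase v₁).card = D₂.card - 1 := Finset.card_erase_of_mem hv₁D₂
      have h3 : 1 ≤ D₂.card := Finset.card_pos.mpr ⟨v₁, hv₁D₂⟩
      have h4 : D₁.card ≤ Dm.card := hD₁card
      omega
  · -- easy case : v₂ is not in the minimum dominating set
    have hnadj : ∀ u' ∈ D₁, ¬G.Adj v₁ u' := by
      intro u' hu' hadj'
      rcases N3 u' (hD₁.1 hu') hadj' with h2' | hleaf
      · exact hc (h2' ▸ hu')
      · exact (leaf_not_mem_min hD₁ hmin₁ hv₁D₁ hadj' hleaf) hu'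
    refine ⟨D₁.erase v₁, erase_dom hD₁ hv₁D₁ hnadj, ?_⟩
    have h2 : (D₁.erase v₁).card = D₁.card - 1 := Finset.card_erase_of_mem hv₁D₁
    have h3 : 1 ≤ D₁.card := Finset.card_pos.mpr ⟨v₁, hv₁D₁⟩
    omega
end Step
section Main
variable {V : Type*} [Fintype V] {G : SimpleGraph V}

lemma main_rec (hac : G.IsAcyclic)
    (hsph : ∀ l : List V, goodSeq G l → (∀ a : V, ¬goodSeq G (l ++ [a])) →
      ∀ v ∈ rem G l, ∃ u ∈ rem G l, G.Adj u v) :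
    ∀ n (l : List V), goodSeq G l → (rem G l).card = n →
      ∀ D : Finset V, Dom G (rem G l) D →
        ∃ I : Finset V, Dom G (rem G l) I ∧ (∀ u ∈ I, ∀ v ∈ I, ¬G.Adj u v) ∧
          I.card ≤ D.card := by
  classical
  intro n
  induction n using Nat.strong_induction_on with
  | _ n ih =>
    intro l hl hcard D hD
    by_cases hne : (rem G l).Nonempty
    · obtain ⟨a, hgood, D', hD', hDcard⟩ := step_lemma hac hsph hl hne hD
      have hlt : (rem G (l ++ [a])).card < n := hcard ▸ card_rem_append_lt hgood
      obtain ⟨I', hI'dom, hI'ind, hI'card⟩ :=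
        ih _ hlt (l ++ [a]) hgood rfl D' hD'
      refine ⟨insert a I', ⟨?_, ?_⟩, ?_, ?_⟩
      · exact Finset.insert_subset (goodSeq_last hgood).1
          (hI'dom.1.trans rem_append_subset)
      · intro v hv
        by_cases hv' : v ∈ rem G (l ++ [a])
        · rcases hI'dom.2 v hv' with h | ⟨u, hu, ha⟩
          · exact Or.inl (Finset.mem_insert_of_mem h)
          · exact Or.inr ⟨u, Finset.mem_insert_of_mem hu, ha⟩
        · have : ¬(v ∈ rem G l ∧ v ≠ a ∧ ¬G.Adj a v) := fun hcon =>
            hv' (mem_rem_append.mpr hcon)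
          push_neg at this
          rcases eq_or_ne v a with rfl | hva
          · exact Or.inl (Finset.mem_insert_self _ _)
          · have hadj : G.Adj a v := by
              by_contra hno
              exact hno (this hv hva)
            exact Or.inr ⟨a, Finset.mem_insert_self _ _, hadj⟩
      · intro u hu w hw hadj
        rcases Finset.mem_insert.mp hu with hua | huI
        · rcases Finset.mem_insert.mp hw with hwa | hwI
          · rw [hua, hwa] at hadj; exact G.loopless.irrefl _ hadj
          · rw [hua] at hadj
            exact (mem_rem_append.mp (hI'dom.1 hwI)).2.2 hadj
        · rcases Finset.mem_insert.mp hw with hwa | hwI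
          · rw [hwa] at hadj
            exact (mem_rem_append.mp (hI'dom.1 huI)).2.2 hadj.symm
          · exact hI'ind u huI w hwI hadj
      · calc (insert a I').card ≤ I'.card + 1 := Finset.card_insert_le _ _
          _ ≤ D'.card + 1 := by omega
          _ ≤ D.card := by omega
    · rw [Finset.not_nonempty_iff_eq_empty] at hne
      refine ⟨∅, ⟨Finset.empty_subset _, ?_⟩, by simp, by simp⟩
      intro v hv
      rw [hne] at hv
      simp at hv
end Main

/-- If `F` is a forest such that every maximal sequence `(a₁,...,a_r)` of vertices,
each adjacent to a leaf of `Fᵢ := F \ N[{a₁,...,a_{i-1}}]`, ends with `F_{r+1}`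
having no isolated vertex (`F` is spherical), then `γ(F) = i(F)`. -/
theorem domNumber_eq_indDomNumber_of_spherical {V : Type*} [Fintype V]
    (G : SimpleGraph V) (hforest : G.IsAcyclic)
    (hsph : ∀ l : List V, goodSeq G l → (∀ a : V, ¬goodSeq G (l ++ [a])) →
      ∀ v ∈ rem G l, ∃ u ∈ rem G l, G.Adj u v) :
    domNumber G = indDomNumber G := by
  classical
  have hDomIff : ∀ D : Finset V,
      (∀ v : V, v ∈ D ∨ ∃ u ∈ D, G.Adj u v) ↔ Dom G (rem G []) D := by
    intro D
    rw [rem_nil]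
    constructor
    · exact fun h => ⟨Finset.subset_univ _, fun v _ => h v⟩
    · exact fun h v => h.2 v (Finset.mem_univ _)
  set Sd := {n | ∃ D : Finset V, (∀ v : V, v ∈ D ∨ ∃ u ∈ D, G.Adj u v) ∧ D.card = n}
    with hSd
  set Si := {n | ∃ D : Finset V, (∀ u ∈ D, ∀ v ∈ D, ¬G.Adj u v) ∧
    (∀ v : V, v ∈ D ∨ ∃ u ∈ D, G.Adj u v) ∧ D.card = n} with hSi
  have hSdne : Sd.Nonempty :=
    ⟨(Finset.univ : Finset V).card, Finset.univ, fun v => Or.inl (Finset.mem_univ v), rfl⟩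
  have hγmem : domNumber G ∈ Sd := Nat.sInf_mem hSdne
  obtain ⟨D, hDdom, hDcard⟩ := hγmem
  obtain ⟨I, hIdom, hIind, hIcard⟩ :=
    main_rec hforest hsph (rem G ([] : List V)).card [] goodSeq_nil rfl D
      ((hDomIff D).mp hDdom)
  have hIdom' : ∀ v : V, v ∈ I ∨ ∃ u ∈ I, G.Adj u v := (hDomIff I).mpr hIdom
  have hImem : I.card ∈ Si := ⟨I, hIind, hIdom', rfl⟩
  have h1 : indDomNumber G ≤ domNumber G := by
    calc indDomNumber G ≤ I.card := Nat.sInf_le hImem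
      _ ≤ D.card := hIcard
      _ = domNumber G := hDcard
  have h2 : domNumber G ≤ indDomNumber G := by
    have hSine : Si.Nonempty := ⟨I.card, hImem⟩
    obtain ⟨D₀, hD₀ind, hD₀dom, hD₀card⟩ := Nat.sInf_mem hSine
    calc domNumber G ≤ D₀.card := Nat.sInf_le ⟨D₀, hD₀dom, rfl⟩
      _ = indDomNumber G := hD₀card
  omega
end

section
/- Let F be a forest with at least one edge. Then there exists an independent dominating set of F of minimum cardinality i(F) that contains a vertex adjacent to a leaf of F. -/
open SimpleGraph

section Helpers

set_option linter.unusedSectionVars false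
variable {V : Type*} [Fintype V] [DecidableEq V] {G : SimpleGraph V}

private lemma support_dist_le {u v y : V} (p : G.Walk u v) (hy : y ∈ p.support) :
    G.dist u y ≤ p.length :=
  le_trans (SimpleGraph.dist_le (p.takeUntil y hy)) (p.length_takeUntil_le hy)

private lemma isPath_concat' {u v w : V} {p : G.Walk u v} (hp : p.IsPath) (h : G.Adj v w)
    (hw : w ∉ p.support) : (p.concat h).IsPath := by
  rw [← Walk.isPath_reverse_iff, Walk.reverse_concat]
  exact hp.reverse.cons (by simpa [Walk.support_reverse] using hw)

private lemma adj_dist (hG : G.IsAcyclic) {u x y : V} (hxy : G.Adj x y)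
    (hrx : G.Reachable u x) :
    G.dist u x + 1 = G.dist u y ∨ G.dist u y + 1 = G.dist u x := by
  have hry : G.Reachable u y := hrx.trans hxy.reachable
  obtain ⟨px, hpx, hlx⟩ := hrx.exists_path_of_dist
  obtain ⟨py, hpy, hly⟩ := hry.exists_path_of_dist
  have h1 : G.dist u y ≤ G.dist u x + 1 := by
    have := SimpleGraph.dist_le (px.concat hxy)
    rwa [Walk.length_concat, hlx] at this
  have h2 : G.dist u x ≤ G.dist u y + 1 := by
    have := SimpleGraph.dist_le (py.concat hxy.symm)
    rwa [Walk.length_concat, hly] at this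
  have hne : G.dist u x ≠ G.dist u y := by
    intro heq
    have hynot : y ∉ px.support := by
      intro hy
      have ht1 : G.dist u y ≤ (px.takeUntil y hy).length := SimpleGraph.dist_le _
      have ht2 : (px.takeUntil y hy).length + (px.dropUntil y hy).length = px.length := by
        have := congrArg Walk.length (px.take_spec hy)
        rwa [Walk.length_append] at this
      have ht3 : 1 ≤ (px.dropUntil y hy).length := by
        have hd : G.dist y x ≤ (px.dropUntil y hy).length := SimpleGraph.dist_le _
        have : G.dist y x ≠ 0 := fun h0 =>
          hxy.ne ((hxy.symm.reachable.dist_eq_zero_iff).mp h0).symm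
        omega
      omega
    have hW1 : (px.concat hxy).IsPath := isPath_concat' hpx hxy hynot
    have := hG.path_unique ⟨px.concat hxy, hW1⟩ ⟨py, hpy⟩
    have hval : px.concat hxy = py := congrArg Subtype.val this
    have := congrArg Walk.length hval
    rw [Walk.length_concat, hlx, hly] at this
    omega
  omega

private lemma unique_parent (hG : G.IsAcyclic) {u v x y : V} (hxv : G.Adj x v)
    (hyv : G.Adj y v) (hx : G.dist u x + 1 = G.dist u v) (hy : G.dist u y + 1 = G.dist u v)
    (hrx : G.Reachable u x) : x = y := by
  have hrv : G.Reachable u v := hrx.trans hxv.reachable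
  have hry : G.Reachable u y := hrv.trans hyv.symm.reachable
  obtain ⟨px, hpx, hlx⟩ := hrx.exists_path_of_dist
  obtain ⟨py, hpy, hly⟩ := hry.exists_path_of_dist
  have hvx : v ∉ px.support := by
    intro hmem
    have := support_dist_le px hmem
    omega
  have hvy : v ∉ py.support := by
    intro hmem
    have := support_dist_le py hmem
    omega
  have hW1 : (px.concat hxv).IsPath := isPath_concat' hpx hxv hvx
  have hW2 : (py.concat hyv).IsPath := isPath_concat' hpy hyv hvy
  have := hG.path_unique ⟨px.concat hxv, hW1⟩ ⟨py.concat hyv, hW2⟩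
  have hval : px.concat hxv = py.concat hyv := congrArg Subtype.val this
  obtain ⟨hv, -⟩ := Walk.concat_inj hval
  exact hv

private lemma maxdist_leaf (hG : G.IsAcyclic) {u0 b : V}
    (hmax : ∀ y, G.Reachable u0 y → G.dist u0 y ≤ G.dist u0 b)
    (hrb : G.Reachable u0 b) (hd : 1 ≤ G.dist u0 b) :
    ∃ a, G.Adj a b ∧ G.dist u0 a + 1 = G.dist u0 b ∧ ∀ y, G.Adj y b → y = a := by
  obtain ⟨p, hp, hl⟩ := hrb.exists_path_of_dist
  have hnn : ¬ p.reverse.Nil := by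
    rw [Walk.not_nil_iff_lt_length, Walk.length_reverse]
    omega
  obtain ⟨a, hba, q, -⟩ := Walk.not_nil_iff.mp hnn
  have hra : G.Reachable u0 a := hrb.trans hba.reachable
  have hab : G.Adj a b := hba.symm
  have hda : G.dist u0 a + 1 = G.dist u0 b := by
    rcases adj_dist hG hab hra with h | h
    · exact h
    · have := hmax a hra; omega
  refine ⟨a, hab, hda, fun y hyb => ?_⟩
  have hry : G.Reachable u0 y := hrb.trans hyb.symm.reachable
  have hdy : G.dist u0 y + 1 = G.dist u0 b := by
    rcases adj_dist hG hyb hry with h | h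
    · exact h
    · have := hmax y hry; omega
  exact unique_parent hG hyb hab hdy hda hry

private lemma exists_indepDom (G : SimpleGraph V) :
    ∃ D : Finset V, (∀ u ∈ D, ∀ v ∈ D, ¬G.Adj u v) ∧
      (∀ v : V, v ∈ D ∨ ∃ u ∈ D, G.Adj u v) := by
  classical
  obtain ⟨D, hDmem, hDmax⟩ := Finset.exists_max_image
    ((Finset.univ : Finset (Finset V)).filter (fun D => ∀ u ∈ D, ∀ v ∈ D, ¬G.Adj u v))
    Finset.card ⟨∅, by simp⟩
  have hind := (Finset.mem_filter.mp hDmem).2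
  refine ⟨D, hind, ?_⟩
  intro v
  by_contra hv
  push_neg at hv
  obtain ⟨hv1, hv2⟩ := hv
  have hins : insert v D ∈ (Finset.univ : Finset (Finset V)).filter
      (fun D => ∀ u ∈ D, ∀ v ∈ D, ¬G.Adj u v) := by
    rw [Finset.mem_filter]
    refine ⟨Finset.mem_univ _, ?_⟩
    intro x hx y hy h
    rcases Finset.mem_insert.mp hx with hx' | hxD
    · rcases Finset.mem_insert.mp hy with hy' | hyD
      · rw [hx', hy'] at h
        exact G.loopless.irrefl v h
      · rw [hx'] at h
        exact hv2 y hyD h.symm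
    · rcases Finset.mem_insert.mp hy with hy' | hyD
      · rw [hy'] at h
        exact hv2 x hxD h
      · exact hind x hxD y hyD h
  have := hDmax _ hins
  rw [Finset.card_insert_of_notMem hv1] at this
  omega

end Helpers

/-- A forest with at least one edge has an independent dominating set of
minimum cardinality `i(F)` containing a vertex adjacent to a leaf. -/
theorem exists_min_indDom_set_near_leaf {V : Type*} [Fintype V] (G : SimpleGraph V)
    (hforest : G.IsAcyclic) (hedge : ∃ u v : V, G.Adj u v) :
    ∃ D : Finset V, (∀ u ∈ D, ∀ v ∈ D, ¬G.Adj u v) ∧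
      (∀ v : V, v ∈ D ∨ ∃ u ∈ D, G.Adj u v) ∧ D.card = indDomNumber G ∧
      ∃ a ∈ D, ∃ b : V, (∃! u, G.Adj u b) ∧ G.Adj a b := by
  classical
  obtain ⟨E, hEi, hEd⟩ := exists_indepDom G
  have hmem : indDomNumber G ∈ {n : ℕ | ∃ D : Finset V,
      (∀ u ∈ D, ∀ v ∈ D, ¬G.Adj u v) ∧ (∀ v : V, v ∈ D ∨ ∃ u ∈ D, G.Adj u v) ∧
      D.card = n} := by
    unfold indDomNumber
    exact Nat.sInf_mem ⟨E.card, E, hEi, hEd, rfl⟩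
  obtain ⟨D₀, hind, hdom, hcard⟩ := hmem
  have hile : ∀ D : Finset V, (∀ u ∈ D, ∀ v ∈ D, ¬G.Adj u v) →
      (∀ v : V, v ∈ D ∨ ∃ u ∈ D, G.Adj u v) → indDomNumber G ≤ D.card := by
    intro D h1 h2
    unfold indDomNumber
    exact Nat.sInf_le ⟨D, h1, h2, rfl⟩
  obtain ⟨u0, v0, huv⟩ := hedge
  obtain ⟨b, hbmem, hbmax⟩ := Finset.exists_max_image
    (Finset.univ.filter (fun x => G.Reachable u0 x)) (G.dist u0)
    ⟨u0, Finset.mem_filter.mpr ⟨Finset.mem_univ _, Reachable.refl _⟩⟩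
  have hrb : G.Reachable u0 b := (Finset.mem_filter.mp hbmem).2
  have hmax : ∀ y, G.Reachable u0 y → G.dist u0 y ≤ G.dist u0 b := fun y hy =>
    hbmax y (Finset.mem_filter.mpr ⟨Finset.mem_univ _, hy⟩)
  have hd1 : 1 ≤ G.dist u0 b := by
    have h1 : G.dist u0 v0 = 1 := SimpleGraph.dist_eq_one_iff_adj.mpr huv
    have := hmax v0 huv.reachable
    omega
  obtain ⟨a, hab, hda, huniqb⟩ := maxdist_leaf hforest hmax hrb hd1
  have hra : G.Reachable u0 a := hrb.trans hab.symm.reachable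
  have hleafb : ∃! u, G.Adj u b := ⟨a, hab, huniqb⟩
  by_cases hsup : ∃ x ∈ D₀, ∃ ℓ : V, (∃! u, G.Adj u ℓ) ∧ G.Adj x ℓ
  · obtain ⟨x, hx, ℓ, h1, h2⟩ := hsup
    exact ⟨D₀, hind, hdom, hcard, x, hx, ℓ, h1, h2⟩
  · push_neg at hsup
    have haD : a ∉ D₀ := fun h => hsup a h b hleafb hab
    have hbD : b ∈ D₀ := by
      rcases hdom b with h | ⟨u, hu, hub⟩
      · exact h
      · exact absurd ((huniqb u hub) ▸ hu) haD
    set C : Finset V := D₀.filter (fun c => G.Adj c a) with hCdef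
    have hbC : b ∈ C := Finset.mem_filter.mpr ⟨hbD, hab.symm⟩
    have hCsub : C ⊆ D₀ := Finset.filter_subset _ _
    have hadjC : ∀ c ∈ C, G.Adj c a := fun c hc => (Finset.mem_filter.mp hc).2
    have hreach_adj_a : ∀ c, G.Adj c a → G.Reachable u0 c := fun c h =>
      hra.trans h.symm.reachable
    have hdich : ∀ c, G.Adj c a →
        (G.dist u0 c + 1 = G.dist u0 a) ∨ (∀ y, G.Adj y c → y = a) := by
      intro c hc
      have hrc := hreach_adj_a c hc
      rcases adj_dist hforest hc hrc with h | h
      · exact Or.inl h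
      · right
        have hceq : G.dist u0 c = G.dist u0 b := by omega
        obtain ⟨z, hz, -, huz⟩ := maxdist_leaf hforest
          (fun y hy => (hmax y hy).trans_eq hceq.symm) hrc (by omega)
        intro y hy
        exact (huz y hy).trans (huz a hc.symm).symm
    set D' : Finset V := insert a (D₀ \ C) with hD'def
    have haD' : a ∈ D' := Finset.mem_insert_self _ _
    have hsubD' : D₀ \ C ⊆ D' := Finset.subset_insert _ _
    have hindep' : ∀ u ∈ D', ∀ v ∈ D', ¬G.Adj u v := by
      intro x hx y hy h
      rcases Finset.mem_insert.mp hx with hx' | hxD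
      · rcases Finset.mem_insert.mp hy with hy' | hyD
        · rw [hx', hy'] at h
          exact G.loopless.irrefl a h
        · rw [hx'] at h
          have h2 := Finset.mem_sdiff.mp hyD
          exact h2.2 (Finset.mem_filter.mpr ⟨h2.1, h.symm⟩)
      · rcases Finset.mem_insert.mp hy with hy' | hyD
        · rw [hy'] at h
          have h2 := Finset.mem_sdiff.mp hxD
          exact h2.2 (Finset.mem_filter.mpr ⟨h2.1, h⟩)
        · exact hind x (Finset.mem_sdiff.mp hxD).1 y (Finset.mem_sdiff.mp hyD).1 h
    have hkey : ∀ v : V, (v ∈ D' ∨ ∃ u ∈ D', G.Adj u v) ∨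
        (∃ pp, pp ∈ C ∧ G.Adj pp v ∧ G.dist u0 pp + 1 = G.dist u0 a ∧
          G.dist u0 v + 1 = G.dist u0 pp ∧ v ∉ D₀) := by
      intro v
      by_cases hva : v = a
      · exact Or.inl (Or.inl (hva ▸ haD'))
      by_cases hvD₀ : v ∈ D₀
      · by_cases hvC : v ∈ C
        · exact Or.inl (Or.inr ⟨a, haD', (hadjC v hvC).symm⟩)
        · exact Or.inl (Or.inl (hsubD' (Finset.mem_sdiff.mpr ⟨hvD₀, hvC⟩)))
      by_cases hout : ∃ u ∈ D₀ \ C, G.Adj u v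
      · obtain ⟨u, hu, huv'⟩ := hout
        exact Or.inl (Or.inr ⟨u, hsubD' hu, huv'⟩)
      push_neg at hout
      have hdomC : ∀ u ∈ D₀, G.Adj u v → u ∈ C := by
        intro u hu huv'
        by_contra huC
        exact hout u (Finset.mem_sdiff.mpr ⟨hu, huC⟩) huv'
      obtain ⟨u1, hu1D, hu1v⟩ := (hdom v).resolve_left hvD₀
      have hu1C : u1 ∈ C := hdomC u1 hu1D hu1v
      have hu1a : G.Adj u1 a := hadjC u1 hu1C
      rcases hdich u1 hu1a with hpar | hleaf
      swap
      · exact absurd (hleaf v hu1v.symm) hva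
      have hrpp : G.Reachable u0 u1 := hreach_adj_a u1 hu1a
      rcases adj_dist hforest hu1v hrpp with hup | hdn
      swap
      · exact Or.inr ⟨u1, hu1C, hu1v, hpar, hdn, hvD₀⟩
      · left; right
        have hrv : G.Reachable u0 v := hrpp.trans hu1v.reachable
        have hex : ∃ r, G.Adj r v ∧ G.dist u0 v + 1 = G.dist u0 r := by
          by_contra hall
          push_neg at hall
          have hub : ∀ y, G.Adj y v → y = u1 := by
            intro y hy
            have hry : G.Reachable u0 y := hrv.trans hy.symm.reachable
            have hyd : G.dist u0 y + 1 = G.dist u0 v := by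
              rcases adj_dist hforest hy hry with h | h
              · exact h
              · exact absurd h (hall y hy)
            exact unique_parent hforest hy hu1v hyd hup hry
          exact hsup u1 (hCsub hu1C) v ⟨u1, hu1v, hub⟩ hu1v
        obtain ⟨r, hrv', hrd⟩ := hex
        have hrr : G.Reachable u0 r := hrv.trans hrv'.symm.reachable
        have hrdb : G.dist u0 r = G.dist u0 b := by omega
        obtain ⟨z, hz, -, huz⟩ := maxdist_leaf hforest
          (fun y hy => (hmax y hy).trans_eq hrdb.symm) hrr (by omega)
        have hzv : ∀ y, G.Adj y r → y = v := by
          intro y hy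
          exact (huz y hy).trans (huz v hrv'.symm).symm
        have hrD₀ : r ∈ D₀ := by
          rcases hdom r with h | ⟨w, hw, hwr⟩
          · exact h
          · exact absurd ((hzv w hwr) ▸ hw) hvD₀
        have hrC : r ∉ C := by
          intro hrC
          exact hva ((hzv a (hadjC r hrC).symm).symm)
        exact ⟨r, hsubD' (Finset.mem_sdiff.mpr ⟨hrD₀, hrC⟩), hrv'⟩
    by_cases hdom' : ∀ v : V, v ∈ D' ∨ ∃ u ∈ D', G.Adj u v
    · have hle1 : indDomNumber G ≤ D'.card := hile D' hindep' hdom'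
      have hcardle : D'.card ≤ D₀.card := by
        have h1 : D'.card ≤ (D₀ \ C).card + 1 := Finset.card_insert_le _ _
        have h2 : (D₀ \ C).card = D₀.card - C.card := Finset.card_sdiff_of_subset hCsub
        have h3 : 1 ≤ C.card := Finset.card_pos.mpr ⟨b, hbC⟩
        have h4 : C.card ≤ D₀.card := Finset.card_le_card hCsub
        omega
      have heq : D'.card = indDomNumber G :=
        le_antisymm (le_of_le_of_eq hcardle hcard) hle1
      exact ⟨D', hindep', hdom', heq, a, haD', b, hleafb, hab⟩
    · push_neg at hdom'
      obtain ⟨v₁, hv₁n, hv₁nd⟩ := hdom'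
      obtain hL | ⟨pp, hppC, hppv, hppd, hv₁d, hv₁D₀⟩ := hkey v₁
      · rcases hL with h | ⟨u, hu, h⟩
        · exact absurd h hv₁n
        · exact absurd h (hv₁nd u hu)
      set D2 : Finset V := insert v₁ D' with hD2def
      have hindep2 : ∀ u ∈ D2, ∀ v ∈ D2, ¬G.Adj u v := by
        intro x hx y hy h
        rcases Finset.mem_insert.mp hx with hx' | hxD
        · rcases Finset.mem_insert.mp hy with hy' | hyD
          · rw [hx', hy'] at h
            exact G.loopless.irrefl _ h
          · rw [hx'] at h
            exact hv₁nd y hyD h.symm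
        · rcases Finset.mem_insert.mp hy with hy' | hyD
          · rw [hy'] at h
            exact hv₁nd x hxD h
          · exact hindep' x hxD y hyD h
      have hrpp : G.Reachable u0 pp := hreach_adj_a pp (hadjC pp hppC)
      have hdom2 : ∀ v : V, v ∈ D2 ∨ ∃ u ∈ D2, G.Adj u v := by
        intro v
        rcases hkey v with hL | ⟨pp', hppC', hppv', hppd', hvd', hvD₀'⟩
        · rcases hL with h | ⟨u, hu, h⟩
          · exact Or.inl (Finset.mem_insert_of_mem h)
          · exact Or.inr ⟨u, Finset.mem_insert_of_mem hu, h⟩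
        · have hpp_eq : pp' = pp :=
            unique_parent hforest (hadjC pp' hppC') (hadjC pp hppC) hppd' hppd
              (hreach_adj_a pp' (hadjC pp' hppC'))
          rw [hpp_eq] at hppv' hvd'
          have hrv : G.Reachable u0 v := hrpp.trans hppv'.reachable
          have hvv : v = v₁ :=
            unique_parent hforest hppv'.symm hppv.symm hvd' hv₁d hrv
          exact Or.inl (by rw [hvv]; exact Finset.mem_insert_self _ _)
      have hle1 : indDomNumber G ≤ D2.card := hile D2 hindep2 hdom2
      have hcardle : D2.card ≤ D₀.card := by
        have h0 : D2.card ≤ D'.card + 1 := Finset.card_insert_le _ _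
        have h1 : D'.card ≤ (D₀ \ C).card + 1 := Finset.card_insert_le _ _
        have h2 : (D₀ \ C).card = D₀.card - C.card := Finset.card_sdiff_of_subset hCsub
        have hne : b ≠ pp := by
          intro h
          rw [← h] at hppd
          omega
        have h3 : 1 < C.card := Finset.one_lt_card.mpr ⟨b, hbC, pp, hppC, hne⟩
        have h4 : C.card ≤ D₀.card := Finset.card_le_card hCsub
        omega
      have heq : D2.card = indDomNumber G :=
        le_antisymm (le_of_le_of_eq hcardle hcard) hle1
      exact ⟨D2, hindep2, hdom2, heq, a, Finset.mem_insert_of_mem haD', b, hleafb, hab⟩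
end

section
/- Let G be a finite simple graph with vertex set V. Then the reduced homology of the independence complex of G vanishes in all degrees k > |V|/2 − 1; that is, hd(Ind(G)) ≤ |V|/2 − 1. -/
variable {V : Type*} [Fintype V] [LinearOrder V]

/-- The group of (augmented) simplicial `ℤ`-chains of the complex `Δ` supported on
faces of cardinality `k` (so `k = d + 1` where `d` is the topological dimension;
`k = 0` corresponds to the empty face). -/
abbrev SChains (Δ : Finset V → Prop) (k : ℕ) : Type _ :=
  {σ : Finset V // Δ σ ∧ σ.card = k} →₀ ℤ

open scoped Classical in
/-- The simplicial boundary map, with signs determined by the linear order on the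
vertices. -/
noncomputable def sbdry (Δ : Finset V → Prop)
    (hΔ : ∀ σ τ : Finset V, τ ⊆ σ → Δ σ → Δ τ) (k : ℕ) :
    SChains Δ (k + 1) →ₗ[ℤ] SChains Δ k :=
  Finsupp.lsum ℤ fun σ =>
    LinearMap.toSpanSingleton ℤ _
      (∑ x ∈ σ.1.attach,
        ((-1 : ℤ) ^ ((σ.1.sort (· ≤ ·)).idxOf x.1)) •
          Finsupp.single
            ⟨σ.1.erase x.1,
              ⟨hΔ _ _ (Finset.erase_subset _ _) σ.2.1,
                by simp [Finset.card_erase_of_mem x.2, σ.2.2]⟩⟩ 1)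

/-- The submodule of simplicial cycles in degree `k` (all of `SChains Δ 0` in
degree `0`, corresponding to the augmented complex). -/
noncomputable def scycles (Δ : Finset V → Prop)
    (hΔ : ∀ σ τ : Finset V, τ ⊆ σ → Δ σ → Δ τ) :
    (k : ℕ) → Submodule ℤ (SChains Δ k)
  | 0 => ⊤
  | (k + 1) => LinearMap.ker (sbdry Δ hΔ k)

/-- The reduced simplicial homology (with `ℤ` coefficients) of `Δ` in topological
dimension `k - 1`: cycles supported on faces of cardinality `k`, modulo
boundaries. -/
noncomputable abbrev sHomology (Δ : Finset V → Prop)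
    (hΔ : ∀ σ τ : Finset V, τ ⊆ σ → Δ σ → Δ τ) (k : ℕ) :=
  scycles Δ hΔ k ⧸
    (LinearMap.range (sbdry Δ hΔ k)).comap (scycles Δ hΔ k).subtype


/-- The independence complex of a graph `G`: faces are the independent sets. -/
def IndC {V : Type*} (G : SimpleGraph V) : Finset V → Prop :=
  fun σ => ∀ u ∈ σ, ∀ v ∈ σ, ¬G.Adj u v

/-- The independence complex is closed under taking subsets. -/
theorem IndC_dc {V : Type*} (G : SimpleGraph V) :
    ∀ σ τ : Finset V, τ ⊆ σ → IndC G σ → IndC G τ :=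
  fun _ _ h hσ u hu v hv => hσ u (h hu) v (h hv)


open Finset

section aux

lemma List.indexOf_eq_countP_lt {V : Type*} [LinearOrder V] [DecidableEq V] :
    ∀ (l : List V), l.Pairwise (· < ·) → ∀ x ∈ l,
      l.idxOf x = l.countP (fun y => y < x)
  | [], _, x, hx => by simp at hx
  | a :: t, h, x, hx => by
    have ht : t.Pairwise (· < ·) := h.of_cons
    have ha : ∀ y ∈ t, a < y := fun y hy => List.rel_of_pairwise_cons h hy
    rcases eq_or_ne x a with rfl | hne
    · rw [List.idxOf_cons_self]
      rw [List.countP_cons]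
      have h1 : (decide (x < x)) = false := by simp
      rw [h1, if_neg (by simp), List.countP_eq_zero.2, Nat.add_zero]
      intro y hy
      simp only [decide_eq_true_eq]
      exact not_lt.2 (ha y hy).le
    · have hxt : x ∈ t := by
        rcases List.mem_cons.1 hx with h' | h'
        · exact absurd h' hne
        · exact h'
      have hax : a < x := ha x hxt
      rw [List.idxOf_cons_ne _ (fun h => hne h.symm), List.countP_cons]
      have h2 : (decide (a < x)) = true := by simpa using hax
      rw [h2, if_pos rfl, List.indexOf_eq_countP_lt t ht x hxt]

variable {V : Type*} [LinearOrder V]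

open scoped Classical in
lemma idx_eq_card_filter (s : Finset V) (x : V) :
    ((s.sort (· ≤ ·)).idxOf x : ℕ) = #(s.filter (· < x)) ∨ x ∉ s := by
  by_cases hx : x ∈ s
  · left
    rw [List.indexOf_eq_countP_lt _ (List.sortedLT_iff_pairwise.1 (Finset.sortedLT_sort s)) x (by simpa using hx)]
    have h := (sort_perm_toList (r := (· ≤ ·)) s).countP_eq (fun y => decide (y < x))
    rw [h, ← Multiset.coe_countP, Finset.toList, Multiset.coe_toList,
      Multiset.countP_eq_card_filter]
    congr 1
  · exact Or.inr hx

open scoped Classical in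
lemma idx_eq (s : Finset V) (x : V) (hx : x ∈ s) :
    ((s.sort (· ≤ ·)).idxOf x : ℕ) = #(s.filter (· < x)) :=
  (idx_eq_card_filter s x).resolve_right (by simpa using hx)

end aux

section core

variable {V : Type*} [Fintype V] [LinearOrder V]

open scoped Classical

variable (Δ : Finset V → Prop) (hΔ : ∀ σ τ : Finset V, τ ⊆ σ → Δ σ → Δ τ)

/-- The cone map at a vertex `v`. -/
noncomputable def coneMap (v : V) (k : ℕ) : SChains Δ k →ₗ[ℤ] SChains Δ (k + 1) :=
  Finsupp.lsum ℤ fun σ =>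
    LinearMap.toSpanSingleton ℤ _
      (if h : v ∉ σ.1 ∧ Δ (insert v σ.1) then
        ((-1 : ℤ) ^ (((insert v σ.1).sort (· ≤ ·)).idxOf v)) •
          Finsupp.single
            ⟨insert v σ.1, h.2, by rw [Finset.card_insert_of_notMem h.1, σ.2.2]⟩ (1 : ℤ)
      else 0)

/-- The vertex removal map at a vertex `v`. -/
noncomputable def rmvMap (v : V) (k : ℕ) : SChains Δ (k + 1) →ₗ[ℤ] SChains Δ k :=
  Finsupp.lsum ℤ fun σ =>
    LinearMap.toSpanSingleton ℤ _
      (if h : v ∈ σ.1 then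
        ((-1 : ℤ) ^ ((σ.1.sort (· ≤ ·)).idxOf v)) •
          Finsupp.single
            ⟨σ.1.erase v, hΔ _ _ (Finset.erase_subset _ _) σ.2.1,
              by simp [Finset.card_erase_of_mem h, σ.2.2]⟩ (1 : ℤ)
      else 0)

lemma coneMap_single (v : V) (k : ℕ) (σ : {σ : Finset V // Δ σ ∧ σ.card = k}) (c : ℤ)
    (h1 : v ∉ σ.1) (h2 : Δ (insert v σ.1)) :
    coneMap Δ v k (Finsupp.single σ c) =
      c • (((-1 : ℤ) ^ (((insert v σ.1).sort (· ≤ ·)).idxOf v)) •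
        Finsupp.single
          ⟨insert v σ.1, h2, by rw [Finset.card_insert_of_notMem h1, σ.2.2]⟩ (1 : ℤ)) := by
  rw [coneMap, Finsupp.lsum_single, LinearMap.toSpanSingleton_apply, dif_pos ⟨h1, h2⟩]

lemma coneMap_single_zero (v : V) (k : ℕ) (σ : {σ : Finset V // Δ σ ∧ σ.card = k}) (c : ℤ)
    (h1 : ¬(v ∉ σ.1 ∧ Δ (insert v σ.1))) :
    coneMap Δ v k (Finsupp.single σ c) = 0 := by
  rw [coneMap, Finsupp.lsum_single, LinearMap.toSpanSingleton_apply, dif_neg h1, smul_zero]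

lemma rmvMap_single (v : V) (k : ℕ) (σ : {σ : Finset V // Δ σ ∧ σ.card = k + 1}) (c : ℤ)
    (h1 : v ∈ σ.1) :
    rmvMap Δ hΔ v k (Finsupp.single σ c) =
      c • (((-1 : ℤ) ^ ((σ.1.sort (· ≤ ·)).idxOf v)) •
        Finsupp.single
          ⟨σ.1.erase v, hΔ _ _ (Finset.erase_subset _ _) σ.2.1,
            by simp [Finset.card_erase_of_mem h1, σ.2.2]⟩ (1 : ℤ)) := by
  rw [rmvMap, Finsupp.lsum_single, LinearMap.toSpanSingleton_apply, dif_pos h1]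

lemma rmvMap_single_zero (v : V) (k : ℕ) (σ : {σ : Finset V // Δ σ ∧ σ.card = k + 1}) (c : ℤ)
    (h1 : v ∉ σ.1) :
    rmvMap Δ hΔ v k (Finsupp.single σ c) = 0 := by
  rw [rmvMap, Finsupp.lsum_single, LinearMap.toSpanSingleton_apply, dif_neg h1, smul_zero]

lemma sbdry_single (k : ℕ) (σ : {σ : Finset V // Δ σ ∧ σ.card = k + 1}) (c : ℤ) :
    sbdry Δ hΔ k (Finsupp.single σ c) =
      c • (∑ x ∈ σ.1.attach,
        ((-1 : ℤ) ^ ((σ.1.sort (· ≤ ·)).idxOf x.1)) •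
          Finsupp.single
            ⟨σ.1.erase x.1,
              ⟨hΔ _ _ (Finset.erase_subset _ _) σ.2.1,
                by simp [Finset.card_erase_of_mem x.2, σ.2.2]⟩⟩ (1 : ℤ)) := by
  rw [sbdry, Finsupp.lsum_single, LinearMap.toSpanSingleton_apply]

end core

section supp

variable {V : Type*} [Fintype V] [LinearOrder V]

open scoped Classical

variable (Δ : Finset V → Prop) (hΔ : ∀ σ τ : Finset V, τ ⊆ σ → Δ σ → Δ τ)

set_option linter.unusedSectionVars false

lemma mem_support_lsum {α β : Type*} (D : α → (β →₀ ℤ)) (z : α →₀ ℤ) (τ : β)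
    (h : τ ∈ ((Finsupp.lsum ℤ fun σ => LinearMap.toSpanSingleton ℤ _ (D σ)) z).support) :
    ∃ σ ∈ z.support, τ ∈ (D σ).support := by
  rw [Finsupp.lsum_apply, Finsupp.sum] at h
  obtain ⟨σ, hσ, hτ⟩ := Finsupp.mem_support_finset_sum τ h
  refine ⟨σ, hσ, ?_⟩
  rw [LinearMap.toSpanSingleton_apply] at hτ
  exact Finsupp.support_smul hτ

lemma coneMap_support (v : V) (k : ℕ) (z : SChains Δ k) :
    ∀ τ ∈ (coneMap Δ v k z).support, ∃ σ ∈ z.support, v ∉ σ.1 ∧ τ.1 = insert v σ.1 := by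
  intro τ hτ
  obtain ⟨σ, hσ, hτD⟩ := mem_support_lsum _ _ _ hτ
  by_cases h : v ∉ σ.1 ∧ Δ (insert v σ.1)
  · rw [dif_pos h] at hτD
    have := Finsupp.support_smul hτD
    have := Finsupp.support_single_subset this
    rw [Finset.mem_singleton] at this
    exact ⟨σ, hσ, h.1, by rw [this]⟩
  · rw [dif_neg h, Finsupp.support_zero] at hτD
    exact absurd hτD (Finset.notMem_empty τ)

lemma rmvMap_support (v : V) (k : ℕ) (z : SChains Δ (k + 1)) :
    ∀ τ ∈ (rmvMap Δ hΔ v k z).support, ∃ σ ∈ z.support, v ∈ σ.1 ∧ τ.1 = σ.1.erase v := by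
  intro τ hτ
  obtain ⟨σ, hσ, hτD⟩ := mem_support_lsum _ _ _ hτ
  by_cases h : v ∈ σ.1
  · rw [dif_pos h] at hτD
    have := Finsupp.support_smul hτD
    have := Finsupp.support_single_subset this
    rw [Finset.mem_singleton] at this
    exact ⟨σ, hσ, h, by rw [this]⟩
  · rw [dif_neg h, Finsupp.support_zero] at hτD
    exact absurd hτD (Finset.notMem_empty τ)

lemma sbdry_support (k : ℕ) (z : SChains Δ (k + 1)) :
    ∀ τ ∈ (sbdry Δ hΔ k z).support, ∃ σ ∈ z.support, τ.1 ⊆ σ.1 := by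
  intro τ hτ
  obtain ⟨σ, hσ, hτD⟩ := mem_support_lsum _ _ _ hτ
  obtain ⟨x, _, hx⟩ := Finsupp.mem_support_finset_sum τ hτD
  have := Finsupp.support_smul hx
  have := Finsupp.support_single_subset this
  rw [Finset.mem_singleton] at this
  refine ⟨σ, hσ, ?_⟩
  rw [this]
  exact Finset.erase_subset _ _

end supp

section sign

variable {V : Type*} [LinearOrder V]

open Finset
open scoped Classical

lemma idx_insert_self (σ : Finset V) (v : V) :
    (((insert v σ).sort (· ≤ ·)).idxOf v : ℕ) = #(σ.filter (· < v)) := by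
  rw [idx_eq _ _ (mem_insert_self v σ), filter_insert, if_neg (lt_irrefl v)]

lemma idx_insert_mem (σ : Finset V) (v x : V) (hv : v ∉ σ) (hx : x ∈ σ) :
    (((insert v σ).sort (· ≤ ·)).idxOf x : ℕ) =
      #(σ.filter (· < x)) + if v < x then 1 else 0 := by
  rw [idx_eq _ _ (mem_insert_of_mem hx), filter_insert]
  by_cases h : v < x
  · rw [if_pos h, if_pos h, card_insert_of_notMem (fun hc => hv (mem_filter.1 hc).1)]
  · rw [if_neg h, if_neg h, Nat.add_zero]

lemma sign_lemma (σ : Finset V) (v x : V) (hv : v ∉ σ) (hx : x ∈ σ) :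
    ((-1 : ℤ) ^ (((insert v σ).sort (· ≤ ·)).idxOf v)) *
      ((-1 : ℤ) ^ (((insert v σ).sort (· ≤ ·)).idxOf x)) =
    -(((-1 : ℤ) ^ ((σ.sort (· ≤ ·)).idxOf x)) *
      ((-1 : ℤ) ^ (((insert v (σ.erase x)).sort (· ≤ ·)).idxOf v))) := by
  have hne : x ≠ v := fun h => hv (h ▸ hx)
  rw [idx_insert_self, idx_insert_mem σ v x hv hx, idx_eq σ x hx,
    idx_insert_self (σ.erase x) v, filter_erase]
  rcases lt_or_gt_of_ne hne with hlt | hgt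
  · -- x < v
    have hmem : x ∈ σ.filter (· < v) := mem_filter.2 ⟨hx, hlt⟩
    have hcard : #((σ.filter (· < v)).erase x) + 1 = #(σ.filter (· < v)) :=
      card_erase_add_one hmem
    rw [if_neg (asymm hlt), ← hcard]
    ring
  · -- v < x
    have hxmem : x ∉ σ.filter (· < v) := fun hc => asymm hgt (mem_filter.1 hc).2
    rw [if_pos hgt, erase_eq_of_notMem hxmem]
    ring
end sign

section coneid

variable {V : Type*} [Fintype V] [LinearOrder V]

open Finset
open scoped Classical

variable (Δ : Finset V → Prop) (hΔ : ∀ σ τ : Finset V, τ ⊆ σ → Δ σ → Δ τ)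

set_option linter.unusedSectionVars false

lemma cone_single_id (v : V) (k : ℕ) (σ : {σ : Finset V // Δ σ ∧ σ.card = k + 1})
    (h : Δ (insert v σ.1)) :
    sbdry Δ hΔ (k + 1) (coneMap Δ v (k + 1) (Finsupp.single σ 1)) +
      coneMap Δ v k (sbdry Δ hΔ k (Finsupp.single σ 1)) = Finsupp.single σ 1 := by
  by_cases hv : v ∈ σ.1
  · -- cone of σ is zero; the only surviving term of cone ∘ bdry is the v-term
    rw [coneMap_single_zero Δ v (k+1) σ 1 (fun hc => hc.1 hv), map_zero, zero_add]
    rw [sbdry_single, one_smul, map_sum]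
    rw [Finset.sum_eq_single_of_mem (⟨v, hv⟩ : {x // x ∈ σ.1}) (mem_attach _ _)]
    · have hins : insert v (σ.1.erase v) = σ.1 := insert_erase hv
      have h2 : Δ (insert v (σ.1.erase v)) := by rw [hins]; exact σ.2.1
      rw [map_smul, coneMap_single Δ v k _ 1 (notMem_erase v σ.1) h2, one_smul]
      have hτ : (⟨insert v (σ.1.erase v), h2,
          by rw [Finset.card_insert_of_notMem (notMem_erase v σ.1)]
             simp [Finset.card_erase_of_mem hv, σ.2.2]⟩ :
          {τ : Finset V // Δ τ ∧ τ.card = k + 1}) = σ := Subtype.ext hins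
      rw [smul_smul, ← pow_add]
      have hidx : (((insert v (σ.1.erase v)).sort (· ≤ ·)).idxOf v : ℕ) =
          ((σ.1.sort (· ≤ ·)).idxOf v : ℕ) := by rw [hins]
      rw [hτ, hidx, ← two_mul, pow_mul]
      norm_num
    · intro x _ hxv
      have : v ∈ σ.1.erase x.1 := mem_erase.2 ⟨fun hc => hxv (Subtype.ext hc.symm), hv⟩
      rw [map_smul, coneMap_single_zero Δ v k _ 1 (fun hc => hc.1 this), smul_zero]
  · -- main case : v ∉ σ
    have hcard : (insert v σ.1).card = k + 1 + 1 := by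
      rw [Finset.card_insert_of_notMem hv, σ.2.2]
    have hvx : ∀ x : {x // x ∈ σ.1}, v ∉ σ.1.erase x.1 :=
      fun x hc => hv (mem_of_mem_erase hc)
    have hΔx : ∀ x : {x // x ∈ σ.1}, Δ (insert v (σ.1.erase x.1)) :=
      fun x => hΔ _ _ (insert_subset_insert v (erase_subset _ _)) h
    set τ' : {x // x ∈ σ.1} → {τ : Finset V // Δ τ ∧ τ.card = k + 1} := fun x =>
      ⟨insert v (σ.1.erase x.1), hΔx x,
        by rw [Finset.card_insert_of_notMem (hvx x)]
           simp [Finset.card_erase_of_mem x.2, σ.2.2]⟩ with hτ'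
    set T : SChains Δ (k + 1) := ∑ x ∈ σ.1.attach,
      ((((-1 : ℤ) ^ (((insert v σ.1).sort (· ≤ ·)).idxOf v)) *
        ((-1 : ℤ) ^ (((insert v σ.1).sort (· ≤ ·)).idxOf x.1))) •
          Finsupp.single (τ' x) (1 : ℤ)) with hT
    have hX : sbdry Δ hΔ (k + 1) (coneMap Δ v (k + 1) (Finsupp.single σ 1)) =
        Finsupp.single σ 1 + T := by
      rw [coneMap_single Δ v (k+1) σ 1 hv h, one_smul, map_smul, sbdry_single, one_smul]
      rw [show ((⟨insert v σ.1, h, hcard⟩ :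
          {τ : Finset V // Δ τ ∧ τ.card = k + 2}).1.attach) =
          insert ⟨v, mem_insert_self v σ.1⟩
            ((σ.1.attach).image fun x => ⟨x.1, mem_insert_of_mem x.2⟩) from attach_insert _ _]
      rw [Finset.sum_insert (by
        intro hmem
        obtain ⟨x, -, hc⟩ := Finset.mem_image.1 hmem
        have : x.1 = v := congrArg Subtype.val hc
        exact hv (this ▸ x.2))]
      rw [Finset.sum_image (by
        intro x _ y _ hxy
        have := congrArg (fun t : {y // y ∈ insert v σ.1} => t.1) hxy
        exact Subtype.ext this)]
      rw [smul_add, Finset.smul_sum]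
      congr 1
      · -- the v-term gives back σ
        have hA : (⟨(insert v σ.1).erase v, hΔ _ _ (erase_subset _ _) h,
              by rw [erase_insert hv, σ.2.2]⟩ :
              {τ : Finset V // Δ τ ∧ τ.card = k + 1}) = σ :=
          Subtype.ext (erase_insert hv)
        show ((-1 : ℤ) ^ (((insert v σ.1).sort (· ≤ ·)).idxOf v)) •
          (((-1 : ℤ) ^ (((insert v σ.1).sort (· ≤ ·)).idxOf v)) •
            Finsupp.single (⟨(insert v σ.1).erase v, hΔ _ _ (erase_subset _ _) h,
              by rw [erase_insert hv, σ.2.2]⟩ :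
              {τ : Finset V // Δ τ ∧ τ.card = k + 1}) (1 : ℤ)) = Finsupp.single σ 1
        rw [hA, smul_smul, ← pow_add, ← two_mul, pow_mul]
        norm_num
      · apply Finset.sum_congr rfl
        intro x _
        have hA : (⟨(insert v σ.1).erase x.1, hΔ _ _ (erase_subset _ _) h,
              by simp [Finset.card_erase_of_mem (mem_insert_of_mem x.2), hcard]⟩ :
              {τ : Finset V // Δ τ ∧ τ.card = k + 1}) = τ' x :=
          Subtype.ext (erase_insert_of_ne (fun hc : v = x.1 => hv (by rw [hc]; exact x.2)))
        show ((-1 : ℤ) ^ (((insert v σ.1).sort (· ≤ ·)).idxOf v)) •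
          (((-1 : ℤ) ^ (((insert v σ.1).sort (· ≤ ·)).idxOf x.1)) •
            Finsupp.single (⟨(insert v σ.1).erase x.1, hΔ _ _ (erase_subset _ _) h,
              by simp [Finset.card_erase_of_mem (mem_insert_of_mem x.2), hcard]⟩ :
              {τ : Finset V // Δ τ ∧ τ.card = k + 1}) (1 : ℤ)) = _
        rw [hA, smul_smul]
    have hY : coneMap Δ v k (sbdry Δ hΔ k (Finsupp.single σ 1)) = -T := by
      rw [sbdry_single, one_smul, map_sum, hT, ← Finset.sum_neg_distrib]
      apply Finset.sum_congr rfl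
      intro x _
      rw [map_smul, coneMap_single Δ v k _ 1 (hvx x) (hΔx x), one_smul]
      have hs := sign_lemma σ.1 v x.1 hv x.2
      show ((-1 : ℤ) ^ ((σ.1.sort (· ≤ ·)).idxOf x.1)) •
        (((-1 : ℤ) ^ (((insert v (σ.1.erase x.1)).sort (· ≤ ·)).idxOf v)) •
          Finsupp.single (τ' x) (1 : ℤ)) = _
      rw [smul_smul, ← neg_smul]
      congr 1
      linarith [hs]
    rw [hX, hY]
    abel

end coneid

section ident

variable {V : Type*} [Fintype V] [LinearOrder V]

open Finset
open scoped Classical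

variable (Δ : Finset V → Prop) (hΔ : ∀ σ τ : Finset V, τ ⊆ σ → Δ σ → Δ τ)

set_option linter.unusedSectionVars false

lemma cone_id (v : V) (k : ℕ) (z : SChains Δ (k + 1))
    (hz : ∀ σ ∈ z.support, Δ (insert v σ.1)) :
    sbdry Δ hΔ (k + 1) (coneMap Δ v (k + 1) z) + coneMap Δ v k (sbdry Δ hΔ k z) = z := by
  induction z using Finsupp.induction with
  | zero => simp
  | single_add a b f haf hb ih =>
    have hsupp := Finsupp.support_single_add haf hb
    have hza : Δ (insert v a.1) := hz a (by rw [hsupp]; exact mem_cons_self _ _)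
    have hzf : ∀ σ ∈ f.support, Δ (insert v σ.1) := fun σ hσ =>
      hz σ (by rw [hsupp]; exact mem_cons_of_mem hσ)
    have hsingle : sbdry Δ hΔ (k + 1) (coneMap Δ v (k + 1) (Finsupp.single a b)) +
        coneMap Δ v k (sbdry Δ hΔ k (Finsupp.single a b)) = Finsupp.single a b := by
      have hb1 : Finsupp.single a b = b • Finsupp.single a (1 : ℤ) := by
        rw [Finsupp.smul_single', mul_one]
      rw [hb1, map_smul, map_smul, map_smul, map_smul, ← smul_add,
        cone_single_id Δ hΔ v k a hza]
    rw [map_add, map_add, map_add, map_add, add_add_add_comm, hsingle, ih hzf]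

lemma rmv_cone (v : V) (k : ℕ) (z : SChains Δ k)
    (hz : ∀ σ ∈ z.support, v ∉ σ.1 ∧ Δ (insert v σ.1)) :
    rmvMap Δ hΔ v k (coneMap Δ v k z) = z := by
  induction z using Finsupp.induction with
  | zero => simp
  | single_add a b f haf hb ih =>
    have hsupp := Finsupp.support_single_add haf hb
    have hza := hz a (by rw [hsupp]; exact mem_cons_self _ _)
    have hzf : ∀ σ ∈ f.support, v ∉ σ.1 ∧ Δ (insert v σ.1) := fun σ hσ =>
      hz σ (by rw [hsupp]; exact mem_cons_of_mem hσ)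
    rw [map_add, map_add, ih hzf]
    congr 1
    rw [coneMap_single Δ v k a b hza.1 hza.2, map_smul, map_smul,
      rmvMap_single Δ hΔ v k _ 1 (mem_insert_self v a.1)]
    have hA : (⟨(insert v a.1).erase v, hΔ _ _ (erase_subset _ _)
          (hΔ _ _ (by rfl) hza.2),
          by rw [erase_insert hza.1, a.2.2]⟩ :
          {τ : Finset V // Δ τ ∧ τ.card = k}) = a := Subtype.ext (erase_insert hza.1)
    show b • (((-1 : ℤ) ^ (((insert v a.1).sort (· ≤ ·)).idxOf v)) •
      ((1 : ℤ) • (((-1 : ℤ) ^ (((insert v a.1).sort (· ≤ ·)).idxOf v)) •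
        Finsupp.single (⟨(insert v a.1).erase v, hΔ _ _ (erase_subset _ _)
          (hΔ _ _ (by rfl) hza.2),
          by rw [erase_insert hza.1, a.2.2]⟩ :
          {τ : Finset V // Δ τ ∧ τ.card = k}) (1 : ℤ)))) = Finsupp.single a b
    rw [one_smul, smul_smul, smul_smul, hA, mul_assoc, ← pow_add, ← two_mul, pow_mul]
    norm_num

lemma cone_rmv (v : V) (k : ℕ) (z : SChains Δ (k + 1))
    (hz : ∀ σ ∈ z.support, v ∈ σ.1) :
    coneMap Δ v k (rmvMap Δ hΔ v k z) = z := by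
  induction z using Finsupp.induction with
  | zero => simp
  | single_add a b f haf hb ih =>
    have hsupp := Finsupp.support_single_add haf hb
    have hza := hz a (by rw [hsupp]; exact mem_cons_self _ _)
    have hzf : ∀ σ ∈ f.support, v ∈ σ.1 := fun σ hσ =>
      hz σ (by rw [hsupp]; exact mem_cons_of_mem hσ)
    rw [map_add, map_add, ih hzf]
    congr 1
    rw [rmvMap_single Δ hΔ v k a b hza, map_smul, map_smul]
    have h2 : Δ (insert v (a.1.erase v)) := by rw [insert_erase hza]; exact a.2.1
    rw [coneMap_single Δ v k _ 1 (notMem_erase v a.1) h2, one_smul]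
    have hA : (⟨insert v (a.1.erase v), h2,
          by rw [Finset.card_insert_of_notMem (notMem_erase v a.1)]
             simp [Finset.card_erase_of_mem hza, a.2.2]⟩ :
          {τ : Finset V // Δ τ ∧ τ.card = k + 1}) = a := Subtype.ext (insert_erase hza)
    have hidx : (((insert v (a.1.erase v)).sort (· ≤ ·)).idxOf v : ℕ) =
        ((a.1.sort (· ≤ ·)).idxOf v : ℕ) := by rw [insert_erase hza]
    rw [smul_smul, smul_smul, hA, hidx, mul_assoc, ← pow_add, ← two_mul, pow_mul]
    norm_num

lemma rmv_of_not_mem (v : V) (k : ℕ) (z : SChains Δ (k + 1))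
    (hz : ∀ σ ∈ z.support, v ∉ σ.1) :
    rmvMap Δ hΔ v k z = 0 := by
  induction z using Finsupp.induction with
  | zero => simp
  | single_add a b f haf hb ih =>
    have hsupp := Finsupp.support_single_add haf hb
    have hza := hz a (by rw [hsupp]; exact mem_cons_self _ _)
    have hzf : ∀ σ ∈ f.support, v ∉ σ.1 := fun σ hσ =>
      hz σ (by rw [hsupp]; exact mem_cons_of_mem hσ)
    rw [map_add, ih hzf, rmvMap_single_zero Δ hΔ v k a b hza, add_zero]

end ident

section mainlemma

variable {V : Type*} [Fintype V] [LinearOrder V]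

open Finset
open scoped Classical

lemma main_vanish (G : SimpleGraph V) :
    ∀ (n : ℕ) (S : Finset V), S.card ≤ n → ∀ (k : ℕ), S.card ≤ 2 * k + 1 →
      ∀ z : SChains (IndC G) (k + 1), sbdry (IndC G) (IndC_dc G) k z = 0 →
      (∀ σ ∈ z.support, σ.1 ⊆ S) →
      ∃ w : SChains (IndC G) (k + 2), sbdry (IndC G) (IndC_dc G) (k + 1) w = z ∧
        ∀ τ ∈ w.support, τ.1 ⊆ S := by
  intro n
  induction n with
  | zero =>
    intro S hS k hk z hcyc hsupp
    have hz0 : z = 0 := by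
      rw [← Finsupp.support_eq_empty]
      apply Finset.eq_empty_of_forall_notMem
      intro σ hσ
      have h1 : σ.1 ⊆ S := hsupp σ hσ
      have h2 : S = ∅ := Finset.card_eq_zero.1 (Nat.le_zero.1 hS)
      have h3 : σ.1 = ∅ := Finset.subset_empty.1 (h2 ▸ h1)
      have := σ.2.2
      rw [h3] at this
      simp at this
    exact ⟨0, by rw [map_zero, hz0], by simp⟩
  | succ n ih =>
    intro S hS k hk z hcyc hsupp
    by_cases hadj : ∃ v ∈ S, ∃ u ∈ S, G.Adj v u
    · obtain ⟨v, hvS, u, huS, hvu⟩ := hadj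
      cases k with
      | zero =>
        exfalso
        have : 1 < S.card := Finset.one_lt_card.2 ⟨v, hvS, u, huS, hvu.ne⟩
        omega
      | succ m =>
        set S' : Finset V := (S.erase v).filter (fun x => ¬ G.Adj v x) with hS'def
        have hS'sub : S' ⊆ S := (Finset.filter_subset _ _).trans (Finset.erase_subset _ _)
        have hvS' : v ∉ S' := fun hc => (Finset.mem_erase.1 (Finset.mem_filter.1 hc).1).1 rfl
        have hgood : ∀ t : Finset V, t ⊆ S' → IndC G t → IndC G (insert v t) := by
          intro t ht hind a ha b hb
        -- independence of insert v t
          rcases Finset.mem_insert.1 ha with rfl | ha' <;>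
            rcases Finset.mem_insert.1 hb with rfl | hb'
          · exact G.loopless.irrefl _
          · exact (Finset.mem_filter.1 (ht hb')).2
          · intro hc
            exact (Finset.mem_filter.1 (ht ha')).2 hc.symm
          · exact hind a ha' b hb'
        -- split z
        set z₂ : SChains (IndC G) (m + 2) := z.filter (fun σ => v ∈ σ.1) with hz₂def
        set z₁ : SChains (IndC G) (m + 2) := z.filter (fun σ => v ∉ σ.1) with hz₁def
        have hsplit : z₂ + z₁ = z := Finsupp.filter_pos_add_filter_neg z _
        have hsupp2 : ∀ σ ∈ z₂.support, v ∈ σ.1 ∧ σ.1 ⊆ S := by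
          intro σ hσ
          rw [hz₂def, Finsupp.support_filter, Finset.mem_filter] at hσ
          exact ⟨hσ.2, hsupp σ hσ.1⟩
        have hsupp1 : ∀ σ ∈ z₁.support, v ∉ σ.1 ∧ σ.1 ⊆ S := by
          intro σ hσ
          rw [hz₁def, Finsupp.support_filter, Finset.mem_filter] at hσ
          exact ⟨hσ.2, hsupp σ hσ.1⟩
        set y : SChains (IndC G) (m + 1) := rmvMap (IndC G) (IndC_dc G) v (m + 1) z₂ with hydef
        have hconey : coneMap (IndC G) v (m + 1) y = z₂ :=
          cone_rmv (IndC G) (IndC_dc G) v (m + 1) z₂ (fun σ hσ => (hsupp2 σ hσ).1)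
        have hy_supp : ∀ τ ∈ y.support, τ.1 ⊆ S' := by
          intro τ hτ
          obtain ⟨σ, hσ, hvσ, hτσ⟩ := rmvMap_support (IndC G) (IndC_dc G) v (m + 1) z₂ τ hτ
          rw [hτσ]
          intro x hx
          have hxσ : x ∈ σ.1 := Finset.mem_of_mem_erase hx
          refine Finset.mem_filter.2 ⟨Finset.mem_erase.2
            ⟨(Finset.mem_erase.1 hx).1, (hsupp2 σ hσ).2 hxσ⟩, ?_⟩
          exact σ.2.1 v hvσ x hxσ
        have hy_good : ∀ τ ∈ y.support, IndC G (insert v τ.1) :=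
          fun τ hτ => hgood τ.1 (hy_supp τ hτ) τ.2.1
        have hy_nv : ∀ τ ∈ y.support, v ∉ τ.1 :=
          fun τ hτ hc => hvS' (hy_supp τ hτ hc)
        -- the cycle equation
        have hze : sbdry (IndC G) (IndC_dc G) (m + 1) z₂ + sbdry (IndC G) (IndC_dc G) (m + 1) z₁ = 0 := by
          rw [← map_add, hsplit, hcyc]
        have hidy := cone_id (IndC G) (IndC_dc G) v m y hy_good
        rw [hconey] at hidy
        -- apply rmv to get the cycle condition for y
        have hy0 : sbdry (IndC G) (IndC_dc G) m y = 0 := by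
          have e1 : rmvMap (IndC G) (IndC_dc G) v m (sbdry (IndC G) (IndC_dc G) (m + 1) z₁) = 0 := by
            apply rmv_of_not_mem
            intro τ hτ
            obtain ⟨σ, hσ, hτσ⟩ := sbdry_support (IndC G) (IndC_dc G) (m + 1) z₁ τ hτ
            exact fun hc => (hsupp1 σ hσ).1 (hτσ hc)
          have e2 : rmvMap (IndC G) (IndC_dc G) v m y = 0 :=
            rmv_of_not_mem _ _ _ _ _ hy_nv
          have e3 : rmvMap (IndC G) (IndC_dc G) v m
              (coneMap (IndC G) v m (sbdry (IndC G) (IndC_dc G) m y)) = sbdry (IndC G) (IndC_dc G) m y := by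
            apply rmv_cone
            intro τ hτ
            obtain ⟨σ, hσ, hτσ⟩ := sbdry_support (IndC G) (IndC_dc G) m y τ hτ
            have hτS' : τ.1 ⊆ S' := hτσ.trans (hy_supp σ hσ)
            exact ⟨fun hc => hvS' (hτS' hc), hgood τ.1 hτS' τ.2.1⟩
          have e4 : sbdry (IndC G) (IndC_dc G) (m + 1) z₂ =
              y - coneMap (IndC G) v m (sbdry (IndC G) (IndC_dc G) m y) := by
            rw [eq_sub_iff_add_eq]
            exact hidy
          have e5 := congrArg (rmvMap (IndC G) (IndC_dc G) v m) hze
          rw [map_add, map_zero, e4, map_sub, e2, e1, add_zero, e3, zero_sub,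
            neg_eq_zero] at e5
          exact e5
        -- first induction: fill y inside S'
        have hucard : u ∈ S.erase v := Finset.mem_erase.2 ⟨fun hc => (G.ne_of_adj hvu) hc.symm, huS⟩
        have hS'sub2 : S' ⊆ (S.erase v).erase u := by
          intro x hx
          refine Finset.mem_erase.2 ⟨?_, (Finset.mem_filter.1 hx).1⟩
          rintro rfl
          exact (Finset.mem_filter.1 hx).2 hvu
        have hS'card : S'.card + 2 ≤ S.card := by
          have h1 := Finset.card_le_card hS'sub2
          have h2 : ((S.erase v).erase u).card = S.card - 1 - 1 := by
            rw [Finset.card_erase_of_mem hucard, Finset.card_erase_of_mem hvS]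
          have h3 : 1 < S.card := Finset.one_lt_card.2 ⟨v, hvS, u, huS, hvu.ne⟩
          omega
        obtain ⟨w'', hw''1, hw''2⟩ := ih S' (by omega) m (by omega) y hy0 hy_supp
        -- second induction: fill z₁ + w'' inside S.erase v
        have hz₃cyc : sbdry (IndC G) (IndC_dc G) (m + 1) (z₁ + w'') = 0 := by
          rw [map_add, hw''1]
          have e4 : sbdry (IndC G) (IndC_dc G) (m + 1) z₂ = y := by
            rw [hy0, map_zero, add_zero] at hidy
            exact hidy
          rw [← e4]
          exact (add_comm _ _).trans hze
        have hz₃supp : ∀ σ ∈ (z₁ + w'').support, σ.1 ⊆ S.erase v := by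
          intro σ hσ
          rcases Finset.mem_union.1 (Finsupp.support_add hσ) with h | h
          · exact Finset.subset_erase.2 ⟨(hsupp1 σ h).2, (hsupp1 σ h).1⟩
          · exact (hw''2 σ h).trans ((Finset.filter_subset _ _))
        have hSe_card : (S.erase v).card + 1 = S.card := Finset.card_erase_add_one hvS
        obtain ⟨wt, hwt1, hwt2⟩ := ih (S.erase v) (by omega) (m + 1) (by omega)
          (z₁ + w'') hz₃cyc hz₃supp
        -- assemble
        have hw''good : ∀ τ ∈ w''.support, IndC G (insert v τ.1) :=
          fun τ hτ => hgood τ.1 (hw''2 τ hτ) τ.2.1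
        have hidw := cone_id (IndC G) (IndC_dc G) v (m + 1) w'' hw''good
        rw [hw''1, hconey] at hidw
        refine ⟨wt - coneMap (IndC G) v (m + 2) w'', ?_, ?_⟩
        · rw [map_sub, hwt1]
          have h5 : sbdry (IndC G) (IndC_dc G) (m + 2) (coneMap (IndC G) v (m + 2) w'') = w'' - z₂ := by
            rw [eq_sub_iff_add_eq]
            exact hidw
          rw [h5]
          have h6 : z₁ + w'' - (w'' - z₂) = z₂ + z₁ := by abel
          rw [h6, hsplit]
        · intro τ hτ
          have : τ ∈ wt.support ∪ (coneMap (IndC G) v (m + 2) w'').support := by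
            rw [sub_eq_add_neg] at hτ
            have := Finsupp.support_add hτ
            rwa [Finsupp.support_neg] at this
          rcases Finset.mem_union.1 this with h | h
          · exact (hwt2 τ h).trans (Finset.erase_subset _ _)
          · obtain ⟨σ, hσ, hvσ, hτσ⟩ := coneMap_support (IndC G) v (m + 2) w'' τ h
            rw [hτσ]
            exact Finset.insert_subset hvS ((hw''2 σ hσ).trans hS'sub)
    · -- no edge inside S : cone over any vertex of S (or S empty)
      rcases Finset.eq_empty_or_nonempty S with rfl | ⟨v, hvS⟩
      · have hz0 : z = 0 := by
          rw [← Finsupp.support_eq_empty]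
          apply Finset.eq_empty_of_forall_notMem
          intro σ hσ
          have h3 : σ.1 = ∅ := Finset.subset_empty.1 (hsupp σ hσ)
          have := σ.2.2
          rw [h3] at this
          simp at this
        exact ⟨0, by rw [map_zero, hz0], by simp⟩
      · push_neg at hadj
        have hgood : ∀ σ ∈ z.support, IndC G (insert v σ.1) := by
          intro σ hσ a ha b hb
          rcases Finset.mem_insert.1 ha with rfl | ha' <;>
            rcases Finset.mem_insert.1 hb with rfl | hb'
          · exact G.loopless.irrefl _
          · exact hadj a hvS b (hsupp σ hσ hb')
          · intro hc
            exact hadj b hvS a (hsupp σ hσ ha') hc.symm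
          · exact σ.2.1 a ha' b hb'
        have hid := cone_id (IndC G) (IndC_dc G) v k z hgood
        rw [hcyc, map_zero, add_zero] at hid
        refine ⟨coneMap (IndC G) v (k + 1) z, hid, ?_⟩
        intro τ hτ
        obtain ⟨σ, hσ, hvσ, hτσ⟩ := coneMap_support (IndC G) v (k + 1) z τ hτ
        rw [hτσ]
        exact Finset.insert_subset hvS (hsupp σ hσ)

end mainlemma

/-- The reduced homology of the independence complex of a finite graph `G`
vanishes in all topological degrees `k > |V|/2 − 1`.  (`sHomology _ _ (k+1)` is
reduced homology in topological dimension `k`.) -/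
theorem indComplex_homology_vanishes {V : Type*} [Fintype V] [LinearOrder V]
    (G : SimpleGraph V) (k : ℕ)
    (hk : (Fintype.card V : ℚ) / 2 - 1 < (k : ℚ)) :
    Subsingleton (sHomology (IndC G) (IndC_dc G) (k + 1)) := by
  have hcard : Fintype.card V ≤ 2 * k + 1 := by
    have h2 : (Fintype.card V : ℚ) < ((2 * k + 2 : ℕ) : ℚ) := by push_cast; linarith
    have h3 : Fintype.card V < 2 * k + 2 := by exact_mod_cast h2
    omega
  rw [Submodule.Quotient.subsingleton_iff, eq_top_iff]
  intro x _
  rw [Submodule.mem_comap]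
  have hcyc : sbdry (IndC G) (IndC_dc G) k x.1 = 0 := x.2
  obtain ⟨w, hw, -⟩ := main_vanish G (Fintype.card V) Finset.univ
    (le_of_eq Finset.card_univ) k (by rw [Finset.card_univ]; exact hcard)
    x.1 hcyc (fun σ _ => Finset.subset_univ _)
  exact ⟨w, hw⟩
end

section
/- Let F be a forest without isolated vertices. Then the number of edge covers of F is odd if and only if the independence complex of F has odd reduced Euler characteristic. -/
open scoped Classical

private lemma zmod2_ne_zero_iff : ∀ x : ZMod 2, x ≠ 0 ↔ x = 1 := by decide

private lemma odd_int_iff_zmod (n : ℤ) : Odd n ↔ (n : ZMod 2) = 1 := by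
  rw [← zmod2_ne_zero_iff, Ne, ZMod.intCast_zmod_eq_zero_iff_dvd n 2,
    ← Int.not_even_iff_odd, even_iff_two_dvd]
  norm_num

private lemma odd_nat_iff_zmod (n : ℕ) : Odd n ↔ (n : ZMod 2) = 1 := by
  rw [← zmod2_ne_zero_iff, Ne, ZMod.natCast_eq_zero_iff n 2,
    ← Nat.not_even_iff_odd, even_iff_two_dvd]

private lemma sdiff_sdiff_univ {V : Type*} [Fintype V] [DecidableEq V] (C : Finset V) :
    Finset.univ \ (Finset.univ \ C) = C := by
  rw [Finset.sdiff_sdiff_self_left, Finset.univ_inter]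

open scoped Classical in
/-- For a forest without isolated vertices, the number of edge covers is odd
if and only if the reduced Euler characteristic of the independence complex
is odd. -/
theorem odd_edgeCovers_iff_odd_euler {V : Type*} [Fintype V] (G : SimpleGraph V)
    (hforest : G.IsAcyclic) (hiso : ∀ v : V, ∃ u, G.Adj u v) :
    Odd ((G.edgeFinset.powerset.filter (fun S => ∀ v : V, ∃ e ∈ S, v ∈ e)).card) ↔
      Odd (∑ σ ∈ Finset.univ.powerset.filter
            (fun σ : Finset V => ∀ u ∈ σ, ∀ v ∈ σ, ¬G.Adj u v),
          (-1 : ℤ) ^ (σ.card + 1)) := by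
  classical
  set I := Finset.univ.powerset.filter
      (fun σ : Finset V => ∀ u ∈ σ, ∀ v ∈ σ, ¬G.Adj u v) with hIdef
  set VC := Finset.univ.powerset.filter
      (fun A : Finset V => ∀ e ∈ G.edgeFinset, ∃ v ∈ A, v ∈ e) with hVCdef
  -- RHS reduction
  rw [odd_int_iff_zmod, odd_nat_iff_zmod]
  have hRHS : ((∑ σ ∈ I, (-1 : ℤ) ^ (σ.card + 1) : ℤ) : ZMod 2) = (I.card : ZMod 2) := by
    push_cast
    rw [Finset.card_eq_sum_ones I]
    push_cast
    refine Finset.sum_congr rfl fun σ _ => ?_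
    have : (-1 : ZMod 2) = 1 := by decide
    rw [this, one_pow]
  rw [hRHS]
  -- LHS: edge covers ≡ vertex covers mod 2
  have hLHS : (((G.edgeFinset.powerset.filter
      (fun S => ∀ v : V, ∃ e ∈ S, v ∈ e)).card : ℕ) : ZMod 2) = (VC.card : ZMod 2) := by
    rw [Finset.card_filter, Finset.card_filter]
    push_cast
    have step1 : ∀ S ∈ G.edgeFinset.powerset,
        (if ∀ v : V, ∃ e ∈ S, v ∈ e then (1 : ZMod 2) else 0)
          = ∑ A ∈ (Finset.univ : Finset V).powerset,
              (if ∀ v ∈ A, ∀ e ∈ S, v ∉ e then (1 : ZMod 2) else 0) := by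
      intro S _
      have h1 : (if ∀ v : V, ∃ e ∈ S, v ∈ e then (1 : ZMod 2) else 0)
          = ∏ v : V, ((if ∀ e ∈ S, v ∉ e then (1 : ZMod 2) else 0) + 1) := by
        rw [← Fintype.prod_boole]
        refine Finset.prod_congr rfl fun v _ => ?_
        by_cases h : ∃ e ∈ S, v ∈ e
        · have h' : ¬ ∀ e ∈ S, v ∉ e := by push_neg; exact h
          simp [h, h']
        · have h' : ∀ e ∈ S, v ∉ e := by push_neg at h; exact h
          rw [if_neg h, if_pos h']
          decide
      rw [h1, Finset.prod_add]
      refine Finset.sum_congr rfl fun A _ => ?_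
      rw [Finset.prod_const_one, mul_one, Finset.prod_boole]
      by_cases h : ∀ v ∈ A, ∀ e ∈ S, v ∉ e
      · rw [if_pos h, if_pos h]
      · rw [if_neg h, if_neg h]
    rw [Finset.sum_congr rfl step1, Finset.sum_comm]
    refine Finset.sum_congr rfl fun A _ => ?_
    -- inner sum over S
    have hset : G.edgeFinset.powerset.filter (fun S => ∀ v ∈ A, ∀ e ∈ S, v ∉ e)
        = (G.edgeFinset.filter (fun e => ∀ v ∈ A, v ∉ e)).powerset := by
      ext S
      simp only [Finset.mem_filter, Finset.mem_powerset, Finset.subset_iff,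
        Finset.mem_filter]
      constructor
      · rintro ⟨hSE, h⟩
        exact fun {e} he => ⟨hSE he, fun v hv => h v hv e he⟩
      · intro h
        exact ⟨fun {e} he => (h he).1, fun v hv e he => (h he).2 v hv⟩
    have h2 : ∑ S ∈ G.edgeFinset.powerset,
        (if ∀ v ∈ A, ∀ e ∈ S, v ∉ e then (1 : ZMod 2) else 0)
        = (((G.edgeFinset.filter (fun e => ∀ v ∈ A, v ∉ e)).powerset.card : ℕ) : ZMod 2) := by
      rw [Finset.sum_boole, hset]
    rw [h2, Finset.card_powerset]
    by_cases hD : (G.edgeFinset.filter (fun e => ∀ v ∈ A, v ∉ e)) = ∅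
    · rw [hD]
      simp only [Finset.card_empty, pow_zero]
      rw [if_pos]
      · norm_num
      · intro e he
        by_contra hne
        push_neg at hne
        have : e ∈ G.edgeFinset.filter (fun e => ∀ v ∈ A, v ∉ e) :=
          Finset.mem_filter.2 ⟨he, hne⟩
        simp [hD] at this
    · have hc : (G.edgeFinset.filter (fun e => ∀ v ∈ A, v ∉ e)).card ≠ 0 := by
        simpa [Finset.card_eq_zero] using hD
      have h20 : ((2 : ZMod 2)) = 0 := by decide
      push_cast
      rw [h20, zero_pow hc, if_neg]
      intro h
      obtain ⟨e, he⟩ := Finset.nonempty_iff_ne_empty.2 hD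
      rw [Finset.mem_filter] at he
      obtain ⟨v, hvA, hve⟩ := h e he.1
      exact he.2 v hvA hve
  rw [hLHS]
  -- vertex covers biject with independent sets
  have hbij : VC.card = I.card := by
    apply Finset.card_bij (fun A _ => Finset.univ \ A)
    · intro A hA
      rw [hVCdef, Finset.mem_filter] at hA
      rw [hIdef, Finset.mem_filter]
      refine ⟨Finset.mem_powerset.2 (Finset.subset_univ _), ?_⟩
      intro u hu v hv hadj
      simp only [Finset.mem_sdiff] at hu hv
      have he : s(u, v) ∈ G.edgeFinset := by
        rw [SimpleGraph.mem_edgeFinset]; exact hadj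
      obtain ⟨w, hwA, hwe⟩ := hA.2 _ he
      rw [Sym2.mem_iff] at hwe
      rcases hwe with rfl | rfl
      · exact hu.2 hwA
      · exact hv.2 hwA
    · intro A hA B hB h
      rw [← sdiff_sdiff_univ A, ← sdiff_sdiff_univ B, h]
    · intro σ hσ
      refine ⟨Finset.univ \ σ, ?_, ?_⟩
      · rw [hIdef, Finset.mem_filter] at hσ
        rw [hVCdef, Finset.mem_filter]
        refine ⟨Finset.mem_powerset.2 (Finset.subset_univ _), ?_⟩
        intro e he
        induction e using Sym2.ind with
        | _ u v =>
          rw [SimpleGraph.mem_edgeFinset, SimpleGraph.mem_edgeSet] at he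
          by_contra hne
          push_neg at hne
          have hu : u ∈ σ := by
            by_contra h'
            exact hne u (Finset.mem_sdiff.2 ⟨Finset.mem_univ _, h'⟩) (by simp)
          have hv : v ∈ σ := by
            by_contra h'
            exact hne v (Finset.mem_sdiff.2 ⟨Finset.mem_univ _, h'⟩) (by simp)
          exact hσ.2 u hu v hv he
      · exact sdiff_sdiff_univ σ
  rw [hbij]
end

section
/- Let Δ and Δ' be simplicial complexes with Δ' obtained from Δ by an elementary collapse removing faces σ ⊃ τ. Then every simplicial cycle of Δ is a ℤ-linear combination of faces different from σ, and every cycle of Δ is homologous in Δ to a ℤ-linear combination of faces different from τ. -/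
variable {V : Type*} [Fintype V] [LinearOrder V]

set_option linter.unusedSectionVars false
set_option linter.unusedVariables false

open scoped Classical in
lemma sbdry_apply (Δ : Finset V → Prop) (hΔ : ∀ σ τ : Finset V, τ ⊆ σ → Δ σ → Δ τ) (k : ℕ)
    (z : SChains Δ (k+1)) (ρ : {ρ : Finset V // Δ ρ ∧ ρ.card = k}) :
    sbdry Δ hΔ k z ρ =
      z.sum fun σ' m => m * ∑ x ∈ σ'.1.attach,
        ((-1:ℤ)^((σ'.1.sort (· ≤ ·)).idxOf x.1)) *
          (if σ'.1.erase x.1 = ρ.1 then 1 else 0) := by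
  simp [sbdry, Finsupp.sum_apply, Finsupp.smul_apply, Finset.sum_apply',
    Finsupp.single_apply, Subtype.ext_iff, mul_ite]

open scoped Classical in
lemma sum_val (Δ : Finset V → Prop)
    (σ τ : Finset V) (hσ : Δ σ) (hcard : σ.card = τ.card + 1)
    (huniq : ∀ ρ : Finset V, Δ ρ → τ ⊂ ρ → ρ = σ)
    (a : V) (haσ : a ∈ σ) (hea : σ.erase a = τ)
    (σ' : {ρ : Finset V // Δ ρ ∧ ρ.card = τ.card + 1}) :
    (∑ x ∈ σ'.1.attach,
        ((-1:ℤ)^((σ'.1.sort (· ≤ ·)).idxOf x.1)) *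
          (if σ'.1.erase x.1 = τ then 1 else 0)) =
      if σ' = ⟨σ, hσ, hcard⟩ then (-1:ℤ)^((σ.sort (· ≤ ·)).idxOf a) else 0 := by
  have haτ : a ∉ τ := by rw [← hea]; exact Finset.notMem_erase _ _
  by_cases hs : σ' = ⟨σ, hσ, hcard⟩
  · subst hs
    rw [if_pos rfl]
    rw [Finset.sum_eq_single_of_mem (⟨a, haσ⟩ : {x // x ∈ σ})
      (Finset.mem_attach _ _)]
    · simp [hea]
    · rintro ⟨x, hx⟩ - hne
      have : σ.erase x ≠ τ := by
        intro h
        apply hne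
        have hxa : x = a := by
          by_contra hxa
          have ha2 : a ∈ σ.erase x :=
            Finset.mem_erase.2 ⟨fun h' => hxa h'.symm, haσ⟩
          rw [h] at ha2
          exact haτ ha2
        simp [hxa]
      simp [this]
  · rw [if_neg hs]
    apply Finset.sum_eq_zero
    rintro ⟨x, hx⟩ -
    have : σ'.1.erase x ≠ τ := by
      intro h
      apply hs
      have hsub : τ ⊂ σ'.1 := by
        have h2 := Finset.erase_ssubset hx
        rwa [h] at h2
      exact Subtype.ext (huniq _ σ'.2.1 hsub)
    simp [this]


/-- Let `Δ' ⊆ Δ` be an elementary collapse removing the faces `σ ⊃ τ` (`σ`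
maximal, `|σ| = |τ| + 1`, and `σ` the unique face of `Δ` properly containing
`τ`).  Then every simplicial cycle of `Δ` has zero coefficient at `σ`, and every
simplicial cycle of `Δ` is homologous in `Δ` to a chain with zero coefficient at
`τ`. -/
theorem collapse_cycles {V : Type*} [Fintype V] [LinearOrder V]
    (Δ : Finset V → Prop) (hΔ : ∀ σ τ : Finset V, τ ⊆ σ → Δ σ → Δ τ)
    (σ τ : Finset V) (hσ : Δ σ) (hτ : Δ τ) (hst : τ ⊂ σ)
    (hcard : σ.card = τ.card + 1)
    (hmax : ∀ ρ : Finset V, Δ ρ → σ ⊆ ρ → ρ = σ)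
    (huniq : ∀ ρ : Finset V, Δ ρ → τ ⊂ ρ → ρ = σ) :
    (∀ z ∈ scycles Δ hΔ σ.card, z ⟨σ, hσ, rfl⟩ = 0) ∧
      (∀ z ∈ scycles Δ hΔ τ.card, ∃ c : SChains Δ (τ.card + 1),
        (z - sbdry Δ hΔ τ.card c) ⟨τ, hτ, rfl⟩ = 0) := by
  classical
  obtain ⟨a, haσ, haτ'⟩ := Finset.exists_of_ssubset hst
  have hc2 : (σ.erase a).card ≤ τ.card := by
    rw [Finset.card_erase_of_mem haσ, hcard]; omega
  have hea : σ.erase a = τ :=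
    (Finset.eq_of_subset_of_card_le (Finset.subset_erase.2 ⟨hst.subset, haτ'⟩) hc2).symm
  set ε : ℤ := (-1:ℤ)^((σ.sort (· ≤ ·)).idxOf a) with hε
  have hε2 : ε * ε = 1 := by
    rw [hε, ← pow_add]; exact Even.neg_one_pow ⟨_, rfl⟩
  constructor
  · suffices H : ∀ (k : ℕ), k = τ.card + 1 → ∀ (h : Δ σ ∧ σ.card = k),
        ∀ z ∈ scycles Δ hΔ k, z ⟨σ, h⟩ = 0 by
      exact fun z hz => H σ.card hcard ⟨hσ, rfl⟩ z hz
    rintro k rfl h z hz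
    have hz' : sbdry Δ hΔ τ.card z = 0 := hz
    have hzτ := DFunLike.congr_fun hz' ⟨τ, hτ, rfl⟩
    rw [sbdry_apply, Finsupp.zero_apply] at hzτ
    simp only [sum_val Δ σ τ hσ hcard huniq a haσ hea] at hzτ
    simp only [mul_ite, mul_zero, ← hε] at hzτ
    rw [Finsupp.sum_ite_eq'] at hzτ
    have hσh : (⟨σ, h⟩ : {ρ : Finset V // Δ ρ ∧ ρ.card = τ.card + 1}) = ⟨σ, hσ, hcard⟩ := rfl
    rw [hσh]
    by_cases hmem : (⟨σ, hσ, hcard⟩ : {ρ : Finset V // Δ ρ ∧ ρ.card = τ.card + 1}) ∈ z.support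
    · rw [if_pos hmem] at hzτ
      have := congrArg (· * ε) hzτ
      simpa [mul_assoc, hε2] using this
    · exact Finsupp.notMem_support_iff.1 hmem
  · intro z _
    refine ⟨Finsupp.single ⟨σ, hσ, hcard⟩ (ε * z ⟨τ, hτ, rfl⟩), ?_⟩
    rw [Finsupp.sub_apply, sbdry_apply, Finsupp.sum_single_index (by simp)]
    rw [show ((⟨τ, hτ, rfl⟩ : {ρ : Finset V // Δ ρ ∧ ρ.card = τ.card}) : Finset V) = τ from rfl]
    rw [sum_val Δ σ τ hσ hcard huniq a haσ hea, if_pos rfl, ← hε]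
    rw [mul_comm ε, mul_assoc, hε2, mul_one, sub_self]
end
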